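/- arXiv:1406.7472 — 13 statements merged into one kernel-verified Lean document; each statement's English description precedes it below -/
import Mathlib

section
/- Every uniquely π-clean ring is abelian, i.e., every idempotent is central. -/
/-- An element `a` is uniquely clean if it can be uniquely written as the
sum of an idempotent and a unit. -/
def UniquelyCleanElem {R : Type*} [Ring R] (a : R) : Prop :=
  ∃! e : R, IsIdempotentElem e ∧ IsUnit (a - e)

/-- A ring is uniquely π-clean if some power of every element is uniquely clean. -/
def UniquelyPiClean (R : Type*) [Ring R] : Prop :=
  ∀ a : R, ∃ n : ℕ, 1 ≤ n ∧ UniquelyCleanElem (a ^ n)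

/-- A ring is abelian if every idempotent is central. -/
def AbelianRing (R : Type*) [Ring R] : Prop :=
  ∀ e : R, IsIdempotentElem e → ∀ x : R, e * x = x * e

/-- If `t` squares to zero, `1 + t` is a unit. -/
lemma unit_one_add_sq_zero {R : Type*} [Ring R] {t : R} (ht : t * t = 0) :
    IsUnit (1 + t) := by
  refine isUnit_iff_exists.mpr ⟨1 - t, ?_, ?_⟩
  · have : (1 + t) * (1 - t) = 1 - t * t := by noncomm_ring
    rw [this, ht, sub_zero]
  · have : (1 - t) * (1 + t) = 1 - t * t := by noncomm_ring
    rw [this, ht, sub_zero]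

lemma unit_two_mul_sub_one {R : Type*} [Ring R] {e : R} (he : IsIdempotentElem e) :
    IsUnit (2 * e - 1) := by
  have key : (2 * e - 1) * (2 * e - 1) = 1 := by
    have : (2 * e - 1) * (2 * e - 1) = 4 * (e * e) - 4 * e + 1 := by noncomm_ring
    rw [this, he.eq]; noncomm_ring
  exact isUnit_iff_exists.mpr ⟨2 * e - 1, key, key⟩

/-- Key step: if `f` and `e` are idempotents with `f - (1 - e)` a unit, then `f = e`. -/
lemma key {R : Type*} [Ring R] (h : UniquelyPiClean R) {e f : R}
    (he : IsIdempotentElem e) (hf : IsIdempotentElem f)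
    (hu : IsUnit (f - (1 - e))) : f = e := by
  obtain ⟨n, hn, g, hg, huniq⟩ := h f
  obtain ⟨m, rfl⟩ := Nat.exists_eq_add_of_le hn
  rw [add_comm, hf.pow_succ_eq] at hg huniq
  have h1 : (1 : R) - f = g := by
    refine huniq _ ⟨?_, ?_⟩
    · simp [IsIdempotentElem, mul_sub, sub_mul, hf.eq]
    · have : f - (1 - f) = 2 * f - 1 := by noncomm_ring
      rw [this]
      exact unit_two_mul_sub_one hf
  have h2 : (1 : R) - e = g := by
    refine huniq _ ⟨?_, ?_⟩
    · simp [IsIdempotentElem, mul_sub, sub_mul, he.eq]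
    · exact hu
  have h3 : (1 : R) - f = 1 - e := h1.trans h2.symm
  have := congrArg (fun y => (1 : R) - y) h3
  simpa [sub_sub_cancel] using this

theorem stmt0 {R : Type*} [Ring R] (h : UniquelyPiClean R) : AbelianRing R := by
  intro e he x
  have h1 : e * x * (1 - e) = 0 := by
    set t := e * x * (1 - e) with ht
    have het : e * t = t := by
      rw [ht, show e * (e * x * (1 - e)) = (e * e) * x * (1 - e) by noncomm_ring, he.eq]
    have hte : t * e = 0 := by
      rw [ht, show e * x * (1 - e) * e = e * x * (e - e * e) by noncomm_ring, he.eq,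
        sub_self, mul_zero]
    have htt : t * t = 0 := by
      calc t * t = t * (e * t) := by rw [het]
        _ = (t * e) * t := (mul_assoc t e t).symm
        _ = 0 := by rw [hte, zero_mul]
    have hf : IsIdempotentElem (e + t) := by
      show (e + t) * (e + t) = e + t
      rw [mul_add, add_mul, add_mul, he.eq, het, hte, htt, add_zero, add_zero]
    have hu : IsUnit (e + t - (1 - e)) := by
      have factor : e + t - (1 - e) = (2 * e - 1) * (1 + t) := by
        rw [mul_add, mul_one, show (2 * e - 1) * t = 2 * (e * t) - t by noncomm_ring, het]
        noncomm_ring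
      rw [factor]
      exact (unit_two_mul_sub_one he).mul (unit_one_add_sq_zero htt)
    have hk : e + t = e := key h he hf hu
    exact (add_eq_left).mp hk
  have h2 : (1 - e) * x * e = 0 := by
    set t := (1 - e) * x * e with ht
    have hte : t * e = t := by
      rw [ht, show (1 - e) * x * e * e = (1 - e) * x * (e * e) by rw [mul_assoc], he.eq]
    have het : e * t = 0 := by
      rw [ht, show e * ((1 - e) * x * e) = (e - e * e) * x * e by noncomm_ring, he.eq,
        sub_self, zero_mul, zero_mul]
    have htt : t * t = 0 := by
      calc t * t = (t * e) * t := by rw [hte]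
        _ = t * (e * t) := mul_assoc t e t
        _ = 0 := by rw [het, mul_zero]
    have hf : IsIdempotentElem (e + t) := by
      show (e + t) * (e + t) = e + t
      rw [mul_add, add_mul, add_mul, he.eq, het, hte, htt, add_zero, add_zero]
    have hu : IsUnit (e + t - (1 - e)) := by
      have factor : e + t - (1 - e) = (1 + t) * (2 * e - 1) := by
        rw [add_mul, one_mul, show t * (2 * e - 1) = 2 * (t * e) - t by noncomm_ring, hte]
        noncomm_ring
      rw [factor]
      exact (unit_one_add_sq_zero htt).mul (unit_two_mul_sub_one he)
    have hk : e + t = e := key h he hf hu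
    exact (add_eq_left).mp hk
  have hx1 : e * x = e * x * e := by
    have : e * x * (1 - e) = e * x - e * x * e := by rw [mul_sub, mul_one]
    rw [this] at h1
    exact sub_eq_zero.mp h1
  have hx2 : x * e = e * x * e := by
    have : (1 - e) * x * e = x * e - e * x * e := by rw [sub_mul, sub_mul, one_mul]
    rw [this] at h2
    exact sub_eq_zero.mp h2
  rw [hx1, hx2]
end

section
/- Every uniquely π-clean ring is strongly clean: for every a ∈ R there exists an idempotent e with ea = ae and a − e a unit. -/
/-- Key auxiliary lemma: if `e` is a uniquely clean idempotent and `t` satisfies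
`e*t + t*e = t` and `t*t = 0`, then `t = 0`. -/
lemma aux_t_eq_zero {R : Type*} [Ring R] {e t : R} (he : IsIdempotentElem e)
    (h1 : e * t + t * e = t) (h2 : t * t = 0)
    (hu : UniquelyCleanElem e) : t = 0 := by
  have hee : e * e = e := he
  obtain ⟨f, _, huniq⟩ := hu
  have hg : IsIdempotentElem (e + t) := by
    have expand : (e + t) * (e + t) = e * e + (e * t + t * e) + t * t := by noncomm_ring
    show (e + t) * (e + t) = e + t
    rw [expand, hee, h1, h2, add_zero]
  have hw : (2 * e - 1 + t) * (2 * e - 1 + t) = 1 := by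
    have expand : (2 * e - 1 + t) * (2 * e - 1 + t)
        = 4 * (e * e) - 4 * e + 1 + 2 * (e * t + t * e) - 2 * t + t * t := by noncomm_ring
    rw [expand, hee, h1, h2]
    abel
  have hw0 : (2 * e - 1) * (2 * e - 1) = 1 := by
    have expand : (2 * e - 1) * (2 * e - 1) = 4 * (e * e) - 4 * e + 1 := by noncomm_ring
    rw [expand, hee]
    abel
  have key1 : 1 - e = f := by
    apply huniq
    constructor
    · exact he.one_sub
    · have : e - (1 - e) = 2 * e - 1 := by noncomm_ring
      rw [this]
      exact ⟨⟨2 * e - 1, 2 * e - 1, hw0, hw0⟩, rfl⟩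
  have key2 : 1 - (e + t) = f := by
    apply huniq
    constructor
    · exact hg.one_sub
    · have : e - (1 - (e + t)) = 2 * e - 1 + t := by noncomm_ring
      rw [this]
      exact ⟨⟨2 * e - 1 + t, 2 * e - 1 + t, hw, hw⟩, rfl⟩
  have h3 : (1 : R) - e = 1 - (e + t) := key1.trans key2.symm
  have : t = (1 - e) - (1 - (e + t)) := by abel
  rw [this, h3, sub_self]

/-- In a uniquely π-clean ring, every idempotent is central. -/
lemma idem_comm {R : Type*} [Ring R] (h : UniquelyPiClean R) {e : R}
    (he : IsIdempotentElem e) (a : R) : e * a = a * e := by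
  have hee : e * e = e := he
  have h1e : (1 - e) * e = 0 := by rw [sub_mul, one_mul, hee, sub_self]
  have he1 : e * (1 - e) = 0 := by rw [mul_sub, mul_one, hee, sub_self]
  obtain ⟨m, hm, hce⟩ := h e
  obtain ⟨k, rfl⟩ : ∃ k, m = k + 1 := ⟨m - 1, by omega⟩
  rw [he.pow_succ_eq k] at hce
  -- First: e * a * (1 - e) = 0
  have ht : e * a * (1 - e) = 0 := by
    apply aux_t_eq_zero he _ _ hce
    · have het : e * (e * a * (1 - e)) = e * a * (1 - e) := by
        simp only [← mul_assoc]
        rw [hee]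
      have hte : (e * a * (1 - e)) * e = 0 := by
        simp only [mul_assoc]
        rw [h1e, mul_zero, mul_zero]
      rw [het, hte, add_zero]
    · have : (e * a * (1 - e)) * (e * a * (1 - e)) = e * a * ((1 - e) * e) * (a * (1 - e)) := by
        simp only [mul_assoc]
      rw [this, h1e, mul_zero, zero_mul]
  have ht' : (1 - e) * a * e = 0 := by
    apply aux_t_eq_zero he _ _ hce
    · have het : e * ((1 - e) * a * e) = 0 := by
        simp only [← mul_assoc]
        rw [he1, zero_mul, zero_mul]
      have hte : ((1 - e) * a * e) * e = (1 - e) * a * e := by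
        simp only [mul_assoc]
        rw [hee]
      rw [het, hte, zero_add]
    · have : ((1 - e) * a * e) * ((1 - e) * a * e) = (1 - e) * a * (e * (1 - e)) * (a * e) := by
        simp only [mul_assoc]
      rw [this, he1, mul_zero, zero_mul]
  rw [mul_sub, mul_one, sub_eq_zero] at ht
  rw [sub_mul, one_mul, sub_mul, sub_eq_zero] at ht'
  exact ht.trans ht'.symm

theorem stmt1 {R : Type*} [Ring R] (h : UniquelyPiClean R) :
    ∀ a : R, ∃ e : R, IsIdempotentElem e ∧ e * a = a * e ∧ IsUnit (a - e) := by
  intro a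
  obtain ⟨n, hn, hca⟩ := h a
  obtain ⟨e, ⟨he, hu⟩, -⟩ := hca
  have hcomm : e * a = a * e := idem_comm h he a
  refine ⟨e, he, hcomm, ?_⟩
  obtain ⟨v, hv⟩ := hu
  obtain ⟨m, rfl⟩ : ∃ m, n = m + 1 := ⟨n - 1, by omega⟩
  set G : R := ∑ i ∈ Finset.range m, a ^ i with hG
  set X : R := e * G + a ^ m with hX
  have hee : e * e = e := he
  -- the key algebraic identity
  have key : (a - e) * X = a ^ (m + 1) - e := by
    have h1 : (a - e) * (e * G) = e * a ^ m - e := by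
      calc (a - e) * (e * G) = ((a - e) * e) * G := by rw [mul_assoc]
        _ = (e * a - e) * G := by rw [sub_mul, ← hcomm, hee]
        _ = (e * (a - 1)) * G := by rw [mul_sub, mul_one]
        _ = e * ((a - 1) * G) := by rw [mul_assoc]
        _ = e * (a ^ m - 1) := by rw [mul_geom_sum]
        _ = e * a ^ m - e := by rw [mul_sub, mul_one]
    have h2 : (a - e) * a ^ m = a ^ (m + 1) - e * a ^ m := by
      rw [sub_mul, ← pow_succ']
    rw [hX, mul_add, h1, h2]
    abel
  have hkey : (a - e) * X = (v : R) := by rw [key, hv]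
  have hce : Commute e a := hcomm
  have c1 : Commute (a - e) a := (Commute.refl a).sub_left hce
  have c2 : Commute (a - e) e := hce.symm.sub_left (Commute.refl e)
  have cX : Commute (a - e) X := by
    apply Commute.add_right
    · exact c2.mul_right (Commute.sum_right _ _ _ (fun i _ => c1.pow_right i))
    · exact c1.pow_right m
  have cv : Commute (a - e) (v : R) := by
    rw [hv]
    exact (c1.pow_right (m + 1)).sub_right c2
  have cvinv : Commute (a - e) ((v⁻¹ : Rˣ) : R) := cv.units_inv_right
  refine ⟨⟨a - e, X * ((v⁻¹ : Rˣ) : R), ?_, ?_⟩, rfl⟩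
  · show (a - e) * (X * ((v⁻¹ : Rˣ) : R)) = 1
    rw [← mul_assoc, hkey]
    exact v.mul_inv
  · show (X * ((v⁻¹ : Rˣ) : R)) * (a - e) = 1
    calc (X * ((v⁻¹ : Rˣ) : R)) * (a - e) = X * (((v⁻¹ : Rˣ) : R) * (a - e)) := by
          rw [mul_assoc]
      _ = X * ((a - e) * ((v⁻¹ : Rˣ) : R)) := by rw [← cvinv.eq]
      _ = (X * (a - e)) * ((v⁻¹ : Rˣ) : R) := by rw [mul_assoc]
      _ = ((a - e) * X) * ((v⁻¹ : Rˣ) : R) := by rw [cX.eq]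
      _ = (v : R) * ((v⁻¹ : Rˣ) : R) := by rw [hkey]
      _ = 1 := v.mul_inv
end

section
/- If R is uniquely π-clean, then the quotient R/J(R) is uniquely π-clean, where J(R) is the Jacobson radical. -/
/-- "R/J(R) is uniquely π-clean", expressed via congruence modulo the
Jacobson radical J: for every a there is n ≥ 1 and e which is an idempotent
modulo J such that a^n - e is a unit modulo J, and e is unique modulo J. -/
def UniquelyPiCleanModJ (R : Type*) [Ring R] : Prop :=
  ∀ a : R, ∃ n : ℕ, 1 ≤ n ∧ ∃ e : R,
    (e * e - e ∈ (⊥ : Ideal R).jacobson ∧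
      ∃ u v : R, u * v - 1 ∈ (⊥ : Ideal R).jacobson ∧
        v * u - 1 ∈ (⊥ : Ideal R).jacobson ∧ a ^ n - e - u ∈ (⊥ : Ideal R).jacobson) ∧
    ∀ f : R,
      (f * f - f ∈ (⊥ : Ideal R).jacobson ∧
        ∃ u v : R, u * v - 1 ∈ (⊥ : Ideal R).jacobson ∧
          v * u - 1 ∈ (⊥ : Ideal R).jacobson ∧ a ^ n - f - u ∈ (⊥ : Ideal R).jacobson) →
      e - f ∈ (⊥ : Ideal R).jacobson

/-!
Uniquely π-clean rings are abelian: for an idempotent `e` and any `x`, the idempotents `1 - e` and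
`1 - (e + e x (1 - e))` both split `e = eⁿ` cleanly, so `e x (1 - e) = 0`. Consequently idempotents
lift modulo any two-sided ideal `I`: if `f` is idempotent mod `I` and `fⁿ = g + w` is the clean
decomposition, then `f` and `g` are commuting idempotents mod `I` whose difference is a unit, which
forces `f ≡ 1 - g`. Modulo `J(R)` units lift as well, so a clean decomposition of `āⁿ` in `R/J(R)`
lifts to one of `aⁿ` in `R`, and uniqueness descends.
-/

section

variable {R : Type*} [Ring R]

lemma IsIdempotentElem.isUnit_two_mul_sub_one {e : R} (he : IsIdempotentElem e) :
    IsUnit (2 * e - 1) := by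
  have hsq : (2 * e - 1) * (2 * e - 1) = 1 := by
    have : (2 * e - 1) * (2 * e - 1) = 4 * (e * e - e) + 1 := by noncomm_ring
    rw [this, he.eq, sub_self, mul_zero, zero_add]
  exact isUnit_iff_exists.2 ⟨_, hsq, hsq⟩

lemma IsIdempotentElem.eq_one_sub_of_isUnit_sub {p q : R} (hp : IsIdempotentElem p)
    (hq : IsIdempotentElem q) (hpq : Commute p q) (hu : IsUnit (p - q)) : p = 1 - q := by
  have hpq0 : p * q = 0 := by
    refine hu.mul_right_eq_zero.1 ?_
    calc (p - q) * (p * q) = p * p * q - q * q * p := by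
          rw [sub_mul, ← mul_assoc, mul_assoc q, ← hpq.eq, mul_assoc]
      _ = 0 := by rw [hp.eq, hq.eq, hpq.eq, sub_self]
  have hqp0 : q * p = 0 := hpq.eq ▸ hpq0
  refine eq_sub_of_add_eq (sub_eq_zero.1 (hu.mul_left_eq_zero.1 ?_)).symm
  calc (1 - (p + q)) * (p - q) = p - p * p - (q - q * q) + (p * q - q * p) := by noncomm_ring
    _ = 0 := by rw [hp.eq, hq.eq, hpq0, hqp0]; abel

lemma Ideal.Quotient.isIdempotentElem_mk_iff {I : Ideal R} [I.IsTwoSided] {x : R} :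
    IsIdempotentElem (Ideal.Quotient.mk I x) ↔ x * x - x ∈ I := by
  rw [IsIdempotentElem, ← map_mul, Ideal.Quotient.eq]

lemma Ideal.Quotient.isUnit_mk_iff {I : Ideal R} [I.IsTwoSided] {x : R} :
    IsUnit (Ideal.Quotient.mk I x) ↔ ∃ y, x * y - 1 ∈ I ∧ y * x - 1 ∈ I := by
  simp only [isUnit_iff_exists, Ideal.Quotient.mk_surjective.exists, ← map_mul,
    ← map_one (Ideal.Quotient.mk I), Ideal.Quotient.eq]

lemma Ideal.Quotient.isUnit_mk_iff_exists_sub_mem {I : Ideal R} [I.IsTwoSided] {x : R} :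
    IsUnit (Ideal.Quotient.mk I x) ↔
      ∃ u v : R, u * v - 1 ∈ I ∧ v * u - 1 ∈ I ∧ x - u ∈ I := by
  constructor
  · intro hx
    obtain ⟨v, hxv, hvx⟩ := Ideal.Quotient.isUnit_mk_iff.1 hx
    exact ⟨x, v, hxv, hvx, by rw [sub_self]; exact I.zero_mem⟩
  · rintro ⟨u, v, huv, hvu, hxu⟩
    rw [Ideal.Quotient.eq.2 hxu]
    exact Ideal.Quotient.isUnit_mk_iff.2 ⟨v, huv, hvu⟩

lemma isUnit_of_sub_one_mem_jacobson_bot {r : R} (hr : r - 1 ∈ (⊥ : Ideal R).jacobson) :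
    IsUnit r := by
  obtain ⟨s, hs⟩ := Ideal.exists_mul_sub_mem_of_sub_one_mem_jacobson r hr
  rw [Ideal.mem_bot, sub_eq_zero] at hs
  have hs1 : s - 1 ∈ (⊥ : Ideal R).jacobson := by
    rw [show s - 1 = -(s * (r - 1)) by rw [mul_sub, hs, mul_one, neg_sub]]
    exact neg_mem (Ideal.mul_mem_left _ s hr)
  obtain ⟨t, ht⟩ := Ideal.exists_mul_sub_mem_of_sub_one_mem_jacobson s hs1
  rw [Ideal.mem_bot, sub_eq_zero, left_inv_eq_right_inv ht hs] at ht
  exact isUnit_iff_exists.2 ⟨s, ht, hs⟩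

lemma isUnit_of_isUnit_mk_jacobson_bot {x : R}
    (hx : IsUnit (Ideal.Quotient.mk (⊥ : Ideal R).jacobson x)) : IsUnit x := by
  obtain ⟨y, hxy, hyx⟩ := Ideal.Quotient.isUnit_mk_iff.1 hx
  obtain ⟨u, hu⟩ := isUnit_of_sub_one_mem_jacobson_bot hxy
  obtain ⟨v, hv⟩ := isUnit_of_sub_one_mem_jacobson_bot hyx
  refine isUnit_iff_exists_and_exists.2 ⟨⟨y * ↑u⁻¹, ?_⟩, ⟨↑v⁻¹ * y, ?_⟩⟩
  · rw [← mul_assoc, ← hu, Units.mul_inv]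
  · rw [mul_assoc, ← hv, Units.inv_mul]

namespace UniquelyPiClean

variable (h : UniquelyPiClean R)
include h

lemma mul_mul_one_sub_eq_zero {e : R} (he : IsIdempotentElem e) (x : R) :
    e * x * (1 - e) = 0 := by
  set q := e * x * (1 - e)
  have hqe : q * e = 0 := by rw [mul_assoc, he.one_sub_mul_self, mul_zero]
  have heq : e * q = q := by simp only [q, ← mul_assoc, he.eq]
  have hq2 : q * q = 0 := by
    rw [show q * q = q * e * x * (1 - e) by simp only [q, mul_assoc], hqe, zero_mul, zero_mul]
  have hf : IsIdempotentElem (e + q) := by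
    show (e + q) * (e + q) = e + q
    rw [add_mul, mul_add, mul_add, he.eq, heq, hqe, hq2, add_zero, add_zero]
  obtain ⟨n, hn, g, -, hg⟩ := h e
  rw [he.pow_eq (by omega)] at hg
  have hc1 : e - (1 - e) = 2 * e - 1 := by noncomm_ring
  have hc2 : e - (1 - (e + q)) = (2 * e - 1) * (1 + q) := by
    calc e - (1 - (e + q)) = 2 * e - 1 + (2 * (e * q) - q) := by rw [heq]; noncomm_ring
      _ = (2 * e - 1) * (1 + q) := by noncomm_ring
  have h1 := hg (1 - e) ⟨he.one_sub, hc1 ▸ he.isUnit_two_mul_sub_one⟩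
  have h2 := hg (1 - (e + q)) ⟨hf.one_sub, hc2 ▸ he.isUnit_two_mul_sub_one.mul
    (IsNilpotent.isUnit_one_add ⟨2, by rw [pow_two, hq2]⟩)⟩
  simpa using h1.trans h2.symm

lemma abelianRing : AbelianRing R := fun e he x => by
  have h1 := h.mul_mul_one_sub_eq_zero he x
  have h2 := h.mul_mul_one_sub_eq_zero he.one_sub x
  rw [mul_sub, mul_one, sub_eq_zero] at h1
  rw [sub_sub_cancel, sub_mul, one_mul, sub_mul, sub_eq_zero] at h2
  rw [h1, h2]

lemma exists_isIdempotentElem_mk_eq (I : Ideal R) [I.IsTwoSided] {f : R}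
    (hf : IsIdempotentElem (Ideal.Quotient.mk I f)) :
    ∃ g : R, IsIdempotentElem g ∧ Ideal.Quotient.mk I g = Ideal.Quotient.mk I f := by
  obtain ⟨n, hn, g, ⟨hg, hu⟩, -⟩ := h f
  refine ⟨1 - g, hg.one_sub, ?_⟩
  have hu' : IsUnit (Ideal.Quotient.mk I f - Ideal.Quotient.mk I g) := by
    simpa only [map_sub, map_pow, hf.pow_eq (by omega : n ≠ 0)] using hu.map (Ideal.Quotient.mk I)
  have hcomm : Commute (Ideal.Quotient.mk I f) (Ideal.Quotient.mk I g) := by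
    simp only [Commute, SemiconjBy, ← map_mul, h.abelianRing g hg f]
  rw [map_sub, map_one, hf.eq_one_sub_of_isUnit_sub (hg.map _) hcomm hu']

theorem quotient_jacobson : UniquelyPiClean (R ⧸ (⊥ : Ideal R).jacobson) := by
  intro A
  obtain ⟨a, rfl⟩ := Ideal.Quotient.mk_surjective A
  obtain ⟨n, hn, e, ⟨he, hu⟩, huniq⟩ := h a
  refine ⟨n, hn, Ideal.Quotient.mk _ e, ⟨he.map _, ?_⟩, ?_⟩
  · rw [← map_pow, ← map_sub]
    exact hu.map _
  rintro F ⟨hF, hFu⟩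
  obtain ⟨f, -, rfl⟩ := Ideal.Quotient.mk_surjective F
  obtain ⟨g, hg, hgf⟩ := h.exists_isIdempotentElem_mk_eq _ hF
  rw [← hgf, ← map_pow, ← map_sub] at hFu
  rw [← hgf, huniq g ⟨hg, isUnit_of_isUnit_mk_jacobson_bot hFu⟩]

end UniquelyPiClean

lemma uniquelyPiCleanModJ_of_quotient (h : UniquelyPiClean (R ⧸ (⊥ : Ideal R).jacobson)) :
    UniquelyPiCleanModJ R := by
  intro a
  obtain ⟨n, hn, E, ⟨hE, hEu⟩, huniq⟩ := h (Ideal.Quotient.mk _ a)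
  obtain ⟨e, rfl⟩ := Ideal.Quotient.mk_surjective E
  rw [← map_pow, ← map_sub] at hEu
  refine ⟨n, hn, e, ⟨Ideal.Quotient.isIdempotentElem_mk_iff.1 hE,
    Ideal.Quotient.isUnit_mk_iff_exists_sub_mem.1 hEu⟩, fun f ⟨hf, hfu⟩ => ?_⟩
  rw [← Ideal.Quotient.isIdempotentElem_mk_iff] at hf
  rw [← Ideal.Quotient.isUnit_mk_iff_exists_sub_mem, map_sub, map_pow] at hfu
  exact Ideal.Quotient.eq.1 (huniq _ ⟨hf, hfu⟩).symm

end

theorem stmt3 {R : Type*} [Ring R] (h : UniquelyPiClean R) : UniquelyPiCleanModJ R :=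
  uniquelyPiCleanModJ_of_quotient h.quotient_jacobson
end

section
/- Let R be an abelian ring in which every idempotent lifts modulo J(R) and R/J(R) is uniquely π-clean. Then R is uniquely π-clean. -/
section Aux

variable {R : Type*} [Ring R]

lemma aux_left_inv {x : R} (h : x ∈ (⊥ : Ideal R).jacobson) :
    ∃ z : R, z * (1 + x) = 1 := by
  obtain ⟨z, hz⟩ := Ideal.mem_jacobson_iff.mp h 1
  rw [Ideal.mem_bot] at hz
  refine ⟨z, ?_⟩
  rw [mul_one] at hz
  have h1 : z * x + z = 1 := by rwa [sub_eq_zero] at hz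
  rw [mul_add, mul_one, add_comm]
  exact h1

lemma aux_unit_one_add {x : R} (h : x ∈ (⊥ : Ideal R).jacobson) : IsUnit (1 + x) := by
  obtain ⟨z, hz⟩ := aux_left_inv h
  obtain ⟨w, hw⟩ := aux_left_inv (neg_mem (Ideal.mul_mem_left _ z h))
  have hz' : (1 : R) + -(z * x) = z := by
    have h1 : z + z * x = 1 := by rw [← hz, mul_add, mul_one]
    rw [← h1]; abel
  rw [hz'] at hw
  have hw' : w = 1 + x := by
    calc w = w * (z * (1 + x)) := by rw [hz, mul_one]
      _ = (w * z) * (1 + x) := by rw [mul_assoc]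
      _ = 1 + x := by rw [hw, one_mul]
  exact isUnit_iff_exists.mpr ⟨z, by rw [← hw', hw], hz⟩

lemma aux_idem_J_zero {g : R} (hg : IsIdempotentElem g)
    (hgJ : g ∈ (⊥ : Ideal R).jacobson) : g = 0 := by
  have hu : IsUnit (1 - g) := by
    have := aux_unit_one_add (neg_mem hgJ)
    simpa [sub_eq_add_neg] using this
  obtain ⟨U, hU⟩ := hu
  have h0 : g * (1 - g) = 0 := by
    rw [mul_sub, mul_one, hg.eq, sub_self]
  calc g = g * ((1 - g) * ↑U⁻¹) := by rw [← hU, U.mul_inv, mul_one]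
    _ = (g * (1 - g)) * ↑U⁻¹ := by rw [mul_assoc]
    _ = 0 := by rw [h0, zero_mul]

lemma aux_unit_of_sub_mem {u w : R} (hu : IsUnit u)
    (h : w - u ∈ (⊥ : Ideal R).jacobson) : IsUnit w := by
  obtain ⟨U, hU⟩ := hu
  have h2 : IsUnit (1 + ↑U⁻¹ * (w - u)) :=
    aux_unit_one_add (Ideal.mul_mem_left _ _ h)
  have hw : w = ↑U * (1 + ↑U⁻¹ * (w - u)) := by
    rw [mul_add, mul_one, ← mul_assoc, U.mul_inv, one_mul, hU]
    abel
  rw [hw]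
  exact U.isUnit.mul h2

lemma aux_unit_mod {u v : R} (huv : u * v - 1 ∈ (⊥ : Ideal R).jacobson)
    (hvu : v * u - 1 ∈ (⊥ : Ideal R).jacobson) : IsUnit u := by
  obtain ⟨A, hA⟩ := aux_unit_of_sub_mem isUnit_one huv
  obtain ⟨B, hB⟩ := aux_unit_of_sub_mem isUnit_one hvu
  have hR : u * (v * ↑A⁻¹) = 1 := by rw [← mul_assoc, ← hA, A.mul_inv]
  have hL : (↑B⁻¹ * v) * u = 1 := by rw [mul_assoc, ← hB, B.inv_mul]
  have heq : (↑B⁻¹ : R) * v = v * ↑A⁻¹ := by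
    calc (↑B⁻¹ : R) * v = (↑B⁻¹ * v) * (u * (v * ↑A⁻¹)) := by rw [hR, mul_one]
      _ = ((↑B⁻¹ * v) * u) * (v * ↑A⁻¹) := by rw [← mul_assoc, ← mul_assoc]
      _ = v * ↑A⁻¹ := by rw [hL, one_mul]
  exact isUnit_iff_exists.mpr ⟨v * ↑A⁻¹, hR, by rw [← heq, hL]⟩

end Aux

theorem stmt4 {R : Type*} [Ring R] (hab : AbelianRing R)
    (hlift : ∀ x : R, x - x * x ∈ (⊥ : Ideal R).jacobson →
      ∃ e : R, IsIdempotentElem e ∧ x - e ∈ (⊥ : Ideal R).jacobson)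
    (hq : UniquelyPiCleanModJ R) : UniquelyPiClean R := by
  intro a
  obtain ⟨n, hn, e₀, ⟨he₀, u, v, huv, hvu, hau⟩, huniq⟩ := hq a
  obtain ⟨e, he, hee₀⟩ := hlift e₀ (by simpa [neg_sub] using neg_mem he₀)
  refine ⟨n, hn, e, ⟨he, ?_⟩, ?_⟩
  · have huu : IsUnit u := aux_unit_mod huv hvu
    have hmem : a ^ n - e - u ∈ (⊥ : Ideal R).jacobson := by
      have h' : a ^ n - e - u = (a ^ n - e₀ - u) + (e₀ - e) := by abel
      rw [h']; exact add_mem hau hee₀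
    exact aux_unit_of_sub_mem huu hmem
  · rintro f ⟨hf, hfu⟩
    obtain ⟨W, hW⟩ := hfu
    have hfJ : e₀ - f ∈ (⊥ : Ideal R).jacobson := by
      refine huniq f ⟨by rw [hf.eq, sub_self]; exact zero_mem _, ↑W, ↑W⁻¹,
        by rw [W.mul_inv, sub_self]; exact zero_mem _,
        by rw [W.inv_mul, sub_self]; exact zero_mem _,
        by rw [hW]; rw [sub_self]; exact zero_mem _⟩
    have hef : e - f ∈ (⊥ : Ideal R).jacobson := by
      have h' : e - f = -(e₀ - e) + (e₀ - f) := by abel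
      rw [h']; exact add_mem (neg_mem hee₀) hfJ
    have hfe : f - e ∈ (⊥ : Ideal R).jacobson := by
      simpa [neg_sub] using neg_mem hef
    -- e * f = e
    have hg : IsIdempotentElem (e * (1 - f)) :=
      IsIdempotentElem.mul_of_commute (hab e he (1 - f)) he hf.one_sub
    have hgJ : e * (1 - f) ∈ (⊥ : Ideal R).jacobson := by
      have h' : e * (1 - f) = e * (e - f) := by
        rw [mul_sub, mul_sub, mul_one, he.eq]
      rw [h']; exact Ideal.mul_mem_left _ _ hef
    have hef1 : e * f = e := by
      have h0 := aux_idem_J_zero hg hgJ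
      rw [mul_sub, mul_one, sub_eq_zero] at h0
      exact h0.symm
    -- f * e = f
    have hh : IsIdempotentElem (f * (1 - e)) :=
      IsIdempotentElem.mul_of_commute (hab f hf (1 - e)) hf he.one_sub
    have hhJ : f * (1 - e) ∈ (⊥ : Ideal R).jacobson := by
      have h' : f * (1 - e) = f * (f - e) := by
        rw [mul_sub, mul_sub, mul_one, hf.eq]
      rw [h']; exact Ideal.mul_mem_left _ _ hfe
    have hfe1 : f * e = f := by
      have h0 := aux_idem_J_zero hh hhJ
      rw [mul_sub, mul_one, sub_eq_zero] at h0
      exact h0.symm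
    calc f = f * e := hfe1.symm
      _ = e * f := (hab e he f).symm
      _ = e := hef1
end

section
/- If R is a uniquely π-clean ring and e ∈ R is an idempotent, then the corner ring eRe is uniquely π-clean. -/
section Aux

variable {R : Type*} [Ring R]

private lemma idem_pow {e : R} (he : IsIdempotentElem e) {n : ℕ} (hn : 1 ≤ n) :
    e ^ n = e := by
  cases n with
  | zero => omega
  | succ m => exact he.pow_succ_eq m

/-- In a uniquely π-clean ring, `e x e = e x` for every idempotent `e`. -/
private lemma key_half (h : UniquelyPiClean R) {e : R}
    (he : IsIdempotentElem e) (x : R) : e * x * e = e * x := by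
  set q : R := e * x - e * x * e with hq
  have heq : e * q = q := by
    simp only [hq, mul_sub, ← mul_assoc, he.eq]
  have hqe : q * e = 0 := by
    rw [hq, sub_mul, mul_assoc (e * x) e e, he.eq, sub_self]
  have hqq : q * q = 0 := by
    nth_rewrite 2 [← heq]
    rw [← mul_assoc, hqe, zero_mul]
  set f : R := e + q with hf
  have hfi : IsIdempotentElem f := by
    show f * f = f
    rw [hf, add_mul, mul_add, mul_add, he.eq, heq, hqe, hqq, add_zero, add_zero]
  obtain ⟨n, hn, hc⟩ := h f
  rw [idem_pow hfi hn] at hc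
  -- first decomposition: f = (1 - f) + (2f - 1)
  have hw1 : (f - (1 - f)) * (f - (1 - f)) = 1 := by
    have h1 : f - (1 - f) = 2 * f - 1 := by noncomm_ring
    have h2 : (2 * f - 1) * (2 * f - 1) = 4 * (f * f) - 4 * f + 1 := by noncomm_ring
    rw [h1, h2, hfi.eq]; noncomm_ring
  have hu1 : IsUnit (f - (1 - f)) := ⟨⟨_, _, hw1, hw1⟩, rfl⟩
  -- second decomposition: f = (1 - e) + (2e - 1 + q)
  have hw2 : (f - (1 - e)) * (f - (1 - e)) = 1 := by
    have h1 : f - (1 - e) = 2 * e - 1 + q := by rw [hf]; noncomm_ring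
    have h2 : (2 * e - 1 + q) * (2 * e - 1 + q) =
        4 * (e * e) - 4 * e + 1 + 2 * (e * q) - 2 * q + 2 * (q * e) + q * q := by
      noncomm_ring
    rw [h1, h2, he.eq, heq, hqe, hqq]; noncomm_ring
  have hu2 : IsUnit (f - (1 - e)) := ⟨⟨_, _, hw2, hw2⟩, rfl⟩
  have huniq : (1 : R) - f = 1 - e := hc.unique ⟨hfi.one_sub, hu1⟩ ⟨he.one_sub, hu2⟩
  have hfe : f = e := by
    rw [← sub_sub_cancel 1 f, huniq, sub_sub_cancel]
  have hq0 : q = 0 := by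
    have h1 : e + q = e := by rw [← hf, hfe]
    exact add_eq_left.mp h1
  have hq0' : e * x - e * x * e = 0 := by rw [← hq]; exact hq0
  exact (sub_eq_zero.mp hq0').symm

/-- Uniquely π-clean rings are abelian. -/
private lemma key_comm (h : UniquelyPiClean R) {e : R}
    (he : IsIdempotentElem e) (x : R) : e * x = x * e := by
  have h1 := key_half h he x
  have h2 := key_half h he.one_sub x
  have hexp : (1 - e) * x * (1 - e) = (1 - e) * x + (e * x * e - x * e) := by
    noncomm_ring
  rw [hexp] at h2
  have h4 : e * x * e = x * e := sub_eq_zero.mp (add_eq_left.mp h2)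
  rw [← h4, h1]

end Aux

theorem stmt5 {R : Type*} [Ring R] (h : UniquelyPiClean R) (e : R)
    (he : IsIdempotentElem e) :
    ∀ a : R, a = e * a * e →
      ∃ n : ℕ, 1 ≤ n ∧ ∃! f : R,
        (f * f = f ∧ f = e * f * e) ∧
        ∃ u : R, u = e * u * e ∧
          (∃ v : R, v = e * v * e ∧ u * v = e ∧ v * u = e) ∧ a ^ n = f + u := by
  intro a ha
  have hea : e * a = a := by
    conv_lhs => rw [ha]
    rw [← mul_assoc, ← mul_assoc, he.eq, ← ha]
  have hae : a * e = a := by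
    conv_lhs => rw [ha]
    rw [mul_assoc, he.eq, ← ha]
  obtain ⟨n, hn, hc⟩ := h a
  obtain ⟨g, ⟨hgI, hgU⟩, hguniq⟩ := hc
  refine ⟨n, hn, ?_⟩
  have hcomm : ∀ x : R, e * x = x * e := fun x => key_comm h he x
  have hean : e * a ^ n = a ^ n := by
    obtain ⟨m, rfl⟩ : ∃ m, n = m + 1 := ⟨n - 1, by omega⟩
    rw [pow_succ', ← mul_assoc, hea]
  obtain ⟨u, hu⟩ := hgU
  have huval : (u : R) = a ^ n - g := hu
  have hgc : e * g = g * e := hcomm g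
  have huc : e * (u : R) = (u : R) * e := hcomm u
  have huinvc : e * ((u⁻¹ : Rˣ) : R) = ((u⁻¹ : Rˣ) : R) * e := hcomm _
  have heg : e * (e * g) = e * g := by rw [← mul_assoc, he.eq]
  refine ⟨e * g, ⟨⟨?_, ?_⟩, ⟨e * u, ?_, ⟨⟨e * ((u⁻¹ : Rˣ) : R), ?_, ?_, ?_⟩, ?_⟩⟩⟩, ?_⟩
  · -- (e*g)*(e*g) = e*g
    have h1 : e * g * (e * g) = e * (g * e) * g := by noncomm_ring
    rw [h1, ← hgc]
    have h2 : e * (e * g) * g = e * e * (g * g) := by noncomm_ring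
    rw [h2, he.eq, hgI.eq]
  · -- e*g = e*(e*g)*e
    have h1 : e * (e * g) * e = e * e * (g * e) := by noncomm_ring
    rw [h1, he.eq, ← hgc, ← mul_assoc, he.eq]
  · have h1 : e * (e * ↑u) * e = e * e * (↑u * e) := by noncomm_ring
    rw [h1, he.eq, ← huc, ← mul_assoc, he.eq]
  · have h1 : e * (e * ↑u⁻¹) * e = e * e * (↑u⁻¹ * e) := by noncomm_ring
    rw [h1, he.eq, ← huinvc, ← mul_assoc, he.eq]
  · have h1 : e * ↑u * (e * ↑u⁻¹) = e * (↑u * e) * ↑u⁻¹ := by noncomm_ring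
    rw [h1, ← huc]
    have h2 : e * (e * ↑u) * ↑u⁻¹ = e * e * (↑u * ↑u⁻¹) := by noncomm_ring
    rw [h2, he.eq, Units.mul_inv, mul_one]
  · have h1 : e * ↑u⁻¹ * (e * ↑u) = e * (↑u⁻¹ * e) * ↑u := by noncomm_ring
    rw [h1, ← huinvc]
    have h2 : e * (e * ↑u⁻¹) * ↑u = e * e * (↑u⁻¹ * ↑u) := by noncomm_ring
    rw [h2, he.eq, Units.inv_mul, mul_one]
  · -- a^n = e*g + e*u
    rw [huval, mul_sub, hean, ← add_sub_assoc, add_sub_cancel_left]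
  · rintro f' ⟨⟨hf'i, hf'c⟩, u', hu'c, ⟨v', hv'c, huv, hvu⟩, hdec⟩
    have hef' : e * f' = f' := by
      conv_lhs => rw [hf'c]
      simp only [← mul_assoc, he.eq]
      exact hf'c.symm
    have hf'e : f' * e = f' := by
      conv_lhs => rw [hf'c]
      rw [mul_assoc, he.eq]
      exact hf'c.symm
    have heu' : e * u' = u' := by
      conv_lhs => rw [hu'c]
      simp only [← mul_assoc, he.eq]
      exact hu'c.symm
    have hu'e : u' * e = u' := by
      conv_lhs => rw [hu'c]
      rw [mul_assoc, he.eq]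
      exact hu'c.symm
    have hev' : e * v' = v' := by
      conv_lhs => rw [hv'c]
      simp only [← mul_assoc, he.eq]
      exact hv'c.symm
    have hv'e : v' * e = v' := by
      conv_lhs => rw [hv'c]
      rw [mul_assoc, he.eq]
      exact hv'c.symm
    -- lift to a clean decomposition in R
    have hg'i : IsIdempotentElem (f' + 1 - e) := by
      show (f' + 1 - e) * (f' + 1 - e) = f' + 1 - e
      simp only [sub_mul, add_mul, mul_sub, mul_add, mul_one, one_mul,
        hf'i, hf'e, hef', he.eq]
      abel
    have hval : a ^ n - (f' + 1 - e) = u' + e - 1 := by rw [hdec]; abel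
    have hw : (u' + e - 1) * (v' + e - 1) = 1 := by
      simp only [sub_mul, add_mul, mul_sub, mul_add, mul_one, one_mul,
        huv, hu'e, hev', he.eq]
      abel
    have hw' : (v' + e - 1) * (u' + e - 1) = 1 := by
      simp only [sub_mul, add_mul, mul_sub, mul_add, mul_one, one_mul,
        hvu, hv'e, heu', he.eq]
      abel
    have hg'u : IsUnit (a ^ n - (f' + 1 - e)) := by
      rw [hval]; exact ⟨⟨_, _, hw, hw'⟩, rfl⟩
    have hg'g : f' + 1 - e = g := hguniq (f' + 1 - e) ⟨hg'i, hg'u⟩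
    rw [← hg'g, mul_sub, mul_add, mul_one, hef', he.eq]
    abel
end

section
/- If R is a local ring that is uniquely π-clean, then R/J(R) is potent: for every a there is n ≥ 2 with aⁿ = a. -/
section Aux
variable {R : Type*} [Ring R] [IsLocalRing R]

lemma aux_or (a : R) : IsUnit a ∨ IsUnit (1 - a) :=
  IsLocalRing.isUnit_or_isUnit_of_add_one (by abel)

lemma aux_idem (e : R) (he : IsIdempotentElem e) : e = 0 ∨ e = 1 := by
  rcases aux_or e with hu | hu
  · right
    exact hu.mul_left_cancel (by rw [he.eq, mul_one])
  · left
    have h1 : (1 - e) * e = 0 := by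
      rw [sub_mul, one_mul, he.eq, sub_self]
    rcases hu with ⟨v, hv⟩
    have := congrArg (fun t => ((v⁻¹ : Rˣ) : R) * t) h1
    simpa [← hv, ← mul_assoc] using this

lemma aux_left_inv_unit {u x : R} (hux : u * x = 1) : IsUnit x := by
  have hx : IsIdempotentElem (x * u) := by
    show (x * u) * (x * u) = x * u
    rw [mul_assoc, ← mul_assoc u, hux, one_mul]
  rcases aux_idem _ hx with h0 | h1
  · exfalso
    have h2 : u * (x * u) * x = 1 := by
      rw [← mul_assoc, hux, one_mul, hux]
    rw [h0] at h2
    simp only [mul_zero, zero_mul] at h2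
    exact one_ne_zero h2.symm
  · exact ⟨⟨x, u, h1, hux⟩, rfl⟩

lemma aux_nonunit_mem_jacobson {x : R} (hx : ¬ IsUnit x) : x ∈ (⊥ : Ideal R).jacobson := by
  rw [Ideal.mem_jacobson_iff]
  intro y
  have hunit : IsUnit (y * x + 1) := by
    rcases aux_or (-(y * x)) with hu | hu
    · exfalso
      rcases (IsUnit.neg_iff _).mp hu with ⟨v, hv⟩
      refine hx (aux_left_inv_unit (u := ((v⁻¹ : Rˣ) : R) * y) ?_)
      rw [mul_assoc, ← hv]
      exact v.inv_mul
    · rwa [sub_neg_eq_add, add_comm] at hu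
  rcases hunit with ⟨v, hv⟩
  refine ⟨((v⁻¹ : Rˣ) : R), ?_⟩
  have h1 : ((v⁻¹ : Rˣ) : R) * (y * x + 1) = 1 := by rw [← hv]; exact v.inv_mul
  rw [mul_add, mul_one, ← mul_assoc] at h1
  rw [Ideal.mem_bot, h1, sub_self]
end Aux

theorem stmt7 {R : Type*} [Ring R] [IsLocalRing R] (h : UniquelyPiClean R) :
    ∀ a : R, ∃ n : ℕ, 2 ≤ n ∧ a ^ n - a ∈ (⊥ : Ideal R).jacobson := by
  intro a
  by_cases ha : IsUnit a
  · obtain ⟨n, hn1, e, ⟨he, hue⟩, huniq⟩ := h a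
    have hnonunit : ¬ IsUnit (a ^ n - 1) := by
      intro hu
      have h0 : (0 : R) = e := huniq 0 ⟨IsIdempotentElem.zero, by simpa using ha.pow n⟩
      have h1 : (1 : R) = e := huniq 1 ⟨IsIdempotentElem.one, hu⟩
      exact one_ne_zero (h1.trans h0.symm)
    refine ⟨n + 1, by omega, ?_⟩
    have he2 : a ^ (n + 1) - a = a * (a ^ n - 1) := by
      rw [mul_sub, mul_one, pow_succ']
    rw [he2]
    exact Ideal.mul_mem_left _ _ (aux_nonunit_mem_jacobson hnonunit)
  · refine ⟨2, le_refl 2, ?_⟩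
    have he2 : a ^ 2 - a = (a - 1) * a := by rw [sub_mul, one_mul, sq]
    rw [he2]
    exact Ideal.mul_mem_left _ _ (aux_nonunit_mem_jacobson ha)
end

section
/- A ring R is uniquely π-clean if and only if R is abelian, every idempotent lifts modulo J(R), and R/J(R) is potent. -/
section aux
variable {R : Type*} [Ring R]

private lemma unit_of_left_right {c l r : R} (hl : l * c = 1) (hr : c * r = 1) : IsUnit c := by
  have hlr : l = r := by rw [← mul_one l, ← hr, ← mul_assoc, hl, one_mul]
  exact ⟨⟨c, r, hr, hlr ▸ hl⟩, rfl⟩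

private lemma sq_unit {s : R} (h : s * s = 1) : IsUnit s := ⟨⟨s, s, h, h⟩, rfl⟩

private lemma memJ {x : R} :
    x ∈ (⊥ : Ideal R).jacobson ↔ ∀ y, IsUnit (1 + y * x) := by
  constructor
  · intro hx y
    have key : ∀ y : R, ∃ z, z * (1 + y * x) = 1 := by
      intro y
      obtain ⟨z, hz⟩ := Ideal.mem_jacobson_iff.1 hx y
      rw [Ideal.mem_bot] at hz
      refine ⟨z, ?_⟩
      have h2 : z * (1 + y * x) = z * y * x + z - 1 + 1 := by noncomm_ring
      rw [h2, hz, zero_add]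
    obtain ⟨z, hz1⟩ := key y
    obtain ⟨z₂, hz2⟩ := key (-(z * y))
    have h3 : 1 + -(z * y) * x = z := by
      have h4 : z * (y * x) = z * (1 + y * x) - z := by noncomm_ring
      rw [hz1] at h4
      have : 1 + -(z * y) * x = 1 - z * (y * x) := by noncomm_ring
      rw [this, h4]; abel
    rw [h3] at hz2
    have hz3 : z₂ = 1 + y * x := by
      calc z₂ = z₂ * (z * (1 + y * x)) := by rw [hz1, mul_one]
        _ = (z₂ * z) * (1 + y * x) := by rw [mul_assoc]
        _ = 1 + y * x := by rw [hz2, one_mul]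
    exact unit_of_left_right hz1 (by rw [← hz3]; exact hz2)
  · intro h
    rw [Ideal.mem_jacobson_iff]
    intro y
    obtain ⟨u, hu⟩ := h y
    refine ⟨↑u⁻¹, ?_⟩
    rw [Ideal.mem_bot]
    have h2 : (↑u⁻¹ : R) * y * x + ↑u⁻¹ - 1 = ↑u⁻¹ * (1 + y * x) - 1 := by noncomm_ring
    rw [h2, ← hu, Units.inv_mul, sub_self]

private lemma unit_swap {a b : R} (h : IsUnit (1 + a * b)) : IsUnit (1 + b * a) := by
  obtain ⟨u, hu⟩ := h
  set w := ((u⁻¹ : Rˣ) : R) with hw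
  have h1 : (1 + a * b) * w = 1 := by rw [← hu]; exact u.mul_inv
  have h2 : w * (1 + a * b) = 1 := by rw [← hu]; exact u.inv_mul
  have e1 : (1 - b * w * a) * (1 + b * a) = 1 + b * a - b * (w * (1 + a * b)) * a := by
    noncomm_ring
  have e2 : (1 + b * a) * (1 - b * w * a) = 1 + b * a - b * ((1 + a * b) * w) * a := by
    noncomm_ring
  rw [h2] at e1; rw [h1] at e2
  refine unit_of_left_right (l := 1 - b * w * a) (r := 1 - b * w * a) ?_ ?_
  · rw [e1]; noncomm_ring
  · rw [e2]; noncomm_ring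

private lemma jmul_right {x : R} (hx : x ∈ (⊥ : Ideal R).jacobson) (r : R) :
    x * r ∈ (⊥ : Ideal R).jacobson := by
  rw [memJ] at hx ⊢
  intro y
  have := unit_swap (a := r) (b := y * x) (by rw [← mul_assoc]; exact hx (r * y))
  rwa [mul_assoc] at this

private lemma j_one_add {j : R} (hj : j ∈ (⊥ : Ideal R).jacobson) : IsUnit (1 + j) := by
  have := memJ.1 hj 1
  rwa [one_mul] at this

private lemma unit_add_j {u j : R} (hu : IsUnit u) (hj : j ∈ (⊥ : Ideal R).jacobson) :
    IsUnit (u + j) := by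
  obtain ⟨v, hv⟩ := hu
  have h1 : IsUnit (1 + (↑v⁻¹ : R) * j) :=
    j_one_add (Ideal.mul_mem_left _ _ hj)
  have h2 : u + j = u * (1 + (↑v⁻¹ : R) * j) := by
    rw [mul_add, mul_one, ← mul_assoc, ← hv, v.mul_inv, one_mul]
  rw [h2]
  exact (hv ▸ v.isUnit).mul h1

private lemma jidem_zero {t : R} (ht : IsIdempotentElem t)
    (hj : t ∈ (⊥ : Ideal R).jacobson) : t = 0 := by
  have h1 : IsUnit (1 - t) := by
    have := j_one_add ((⊥ : Ideal R).jacobson.neg_mem hj)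
    rwa [← sub_eq_add_neg] at this
  obtain ⟨v, hv⟩ := h1
  have h2 : t * (1 - t) = 0 := by
    have h3 : t * t = t := ht
    rw [mul_sub, mul_one, h3, sub_self]
  calc t = t * ((1 - t) * ↑v⁻¹) := by rw [← hv, v.mul_inv, mul_one]
    _ = (t * (1 - t)) * ↑v⁻¹ := by rw [mul_assoc]
    _ = 0 := by rw [h2, zero_mul]

/-- `a` is invertible in the corner ring `hR` (for `h` a central idempotent). -/
private def CUnit (h a : R) : Prop := ∃ z, h * z = z ∧ a * z = h ∧ z * a = h

private lemma glue {h t : R} (hc : ∀ x, h * x = x * h)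
    (h1 : CUnit h (t * h)) (h2 : CUnit (1 - h) (t * (1 - h))) : IsUnit t := by
  obtain ⟨z₁, hz1, ha1, hb1⟩ := h1
  obtain ⟨z₂, hz2, ha2, hb2⟩ := h2
  have hc' : ∀ x, (1 - h) * x = x * (1 - h) := by
    intro x; rw [sub_mul, mul_sub, one_mul, mul_one, hc]
  refine unit_of_left_right (l := z₁ + z₂) (r := z₁ + z₂) ?_ ?_
  · have e1 : z₁ * t = h := by
      calc z₁ * t = (h * z₁) * t := by rw [hz1]
        _ = h * (z₁ * t) := by rw [mul_assoc]
        _ = (z₁ * t) * h := by rw [hc]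
        _ = z₁ * (t * h) := by rw [mul_assoc]
        _ = h := hb1
    have e2 : z₂ * t = 1 - h := by
      calc z₂ * t = ((1 - h) * z₂) * t := by rw [hz2]
        _ = (1 - h) * (z₂ * t) := by rw [mul_assoc]
        _ = (z₂ * t) * (1 - h) := by rw [hc']
        _ = z₂ * (t * (1 - h)) := by rw [mul_assoc]
        _ = 1 - h := hb2
    rw [add_mul, e1, e2]; abel
  · have e1 : t * z₁ = h := by
      calc t * z₁ = t * (h * z₁) := by rw [hz1]
        _ = (t * h) * z₁ := by rw [mul_assoc]
        _ = h := ha1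
    have e2 : t * z₂ = 1 - h := by
      calc t * z₂ = t * ((1 - h) * z₂) := by rw [hz2]
        _ = (t * (1 - h)) * z₂ := by rw [mul_assoc]
        _ = 1 - h := ha2
    rw [mul_add, e1, e2]; abel

private lemma df (hA : AbelianRing R) {h a z : R} (hh : IsIdempotentElem h)
    (hha : h * a = a) (hhz : h * z = z) (haz : a * z = h) : z * a = h := by
  have hch := hA h hh
  have htt : IsIdempotentElem (z * a) := by
    unfold IsIdempotentElem
    calc z * a * (z * a) = z * ((a * z) * a) := by noncomm_ring
      _ = z * (h * a) := by rw [haz]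
      _ = z * a := by rw [hha]
  have hct := hA _ htt
  have hat : a * (z * a) = a := by
    calc a * (z * a) = (a * z) * a := by rw [mul_assoc]
      _ = h * a := by rw [haz]
      _ = a := hha
  have hht : h * (z * a) = z * a := by
    calc h * (z * a) = (h * z) * a := by rw [mul_assoc]
      _ = z * a := by rw [hhz]
  have hth : (z * a) * h = z * a := by rw [hct, hht]
  have hss : IsIdempotentElem (h - z * a) := by
    unfold IsIdempotentElem
    have : (h - z * a) * (h - z * a)
        = h * h - h * (z * a) - (z * a) * h + (z * a) * (z * a) := by noncomm_ring
    rw [this, hh, hht, hth, htt]; abel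
  have hcs := hA _ hss
  have hsa : (h - z * a) * a = 0 := by
    rw [hcs]
    have : a * (h - z * a) = a * h - a * (z * a) := by noncomm_ring
    rw [this, ← hch, hha, hat, sub_self]
  have hs : h - z * a = (h - z * a) * h := by
    rw [hcs]
    have : h * (h - z * a) = h * h - h * (z * a) := by noncomm_ring
    rw [this, hh, hht]
  have h0 : h - z * a = 0 := by
    calc h - z * a = (h - z * a) * h := hs
      _ = (h - z * a) * (a * z) := by rw [haz]
      _ = ((h - z * a) * a) * z := by rw [mul_assoc]
      _ = 0 := by rw [hsa, zero_mul]
  exact (sub_eq_zero.1 h0).symm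

private lemma cunit_mul {h c d : R} (hc : ∀ x, h * x = x * h)
    (hhc : h * c = c) (hhd : h * d = d)
    (h1 : CUnit h c) (h2 : CUnit h d) : CUnit h (c * d) := by
  obtain ⟨u, hu, hcu, huc⟩ := h1
  obtain ⟨v, hv, hdv, hvd⟩ := h2
  refine ⟨v * u, ?_, ?_, ?_⟩
  · rw [← mul_assoc, hv]
  · calc c * d * (v * u) = c * ((d * v) * u) := by noncomm_ring
      _ = c * (h * u) := by rw [hdv]
      _ = c * u := by rw [hu]
      _ = h := hcu
  · calc v * u * (c * d) = v * ((u * c) * d) := by noncomm_ring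
      _ = v * (h * d) := by rw [huc]
      _ = v * d := by rw [hhd]
      _ = h := hvd

private lemma mulpow {h c : R} (hhc : h * c = c) : ∀ n, 1 ≤ n → h * c ^ n = c ^ n := by
  intro n hn
  induction n, hn using Nat.le_induction with
  | base => rw [pow_one]; exact hhc
  | succ m hm ih => rw [pow_succ, ← mul_assoc, ih]

private lemma cunit_pow {h c : R} (hcen : ∀ x, h * x = x * h)
    (hhc : h * c = c) (h1 : CUnit h c) : ∀ n, 1 ≤ n → CUnit h (c ^ n) := by
  intro n hn
  induction n, hn using Nat.le_induction with
  | base => rw [pow_one]; exact h1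
  | succ m hm ih =>
    rw [pow_succ]
    exact cunit_mul hcen (mulpow hhc m hm) hhc ih h1

private lemma pow_mul_central {a h : R} (hh : IsIdempotentElem h)
    (hc : ∀ x, h * x = x * h) : ∀ n, 1 ≤ n → (a * h) ^ n = a ^ n * h := by
  intro n hn
  induction n, hn using Nat.le_induction with
  | base => rw [pow_one, pow_one]
  | succ m hm ih =>
    rw [pow_succ, ih, pow_succ]
    calc a ^ m * h * (a * h) = a ^ m * ((h * a) * h) := by noncomm_ring
      _ = a ^ m * ((a * h) * h) := by rw [hc]
      _ = a ^ m * (a * (h * h)) := by noncomm_ring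
      _ = a ^ m * a * h := by rw [hh]; noncomm_ring

private lemma idem_pow_eq {t : R} (ht : IsIdempotentElem t) {n : ℕ} (hn : 1 ≤ n) :
    t ^ n = t := by
  cases n with
  | zero => omega
  | succ m => exact ht.pow_succ_eq m

end aux

section main
variable {R : Type*} [Ring R]

/-- Key uniqueness exploitation: a square-zero element `j` with `e*j + j*e = j`
for the idempotent `e` must vanish in a uniquely π-clean ring. -/
private lemma uniq_j (hR : UniquelyPiClean R) {e j : R} (he : IsIdempotentElem e)
    (hjj : j * j = 0) (hej : e * j + j * e = j) : j = 0 := by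
  have he' : e * e = e := he
  have ht : IsIdempotentElem (e + j) := by
    unfold IsIdempotentElem
    have : (e + j) * (e + j) = e * e + (e * j + j * e) + j * j := by noncomm_ring
    rw [this, he', hej, hjj, add_zero]
  obtain ⟨n, hn, f, hf, huniq⟩ := hR (e + j)
  have htn : (e + j) ^ n = e + j := idem_pow_eq ht hn
  have c1 : (1 : R) - (e + j) = f := by
    refine huniq _ ⟨ht.one_sub, ?_⟩
    rw [htn]
    refine sq_unit ?_
    have h4 : ((e + j) - (1 - (e + j))) * ((e + j) - (1 - (e + j)))
        = ((e+j)*(e+j) + (e+j)*(e+j) + (e+j)*(e+j) + (e+j)*(e+j))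
          - ((e+j) + (e+j) + (e+j) + (e+j)) + 1 := by noncomm_ring
    rw [h4, ht]; abel
  have c2 : (1 : R) - e = f := by
    refine huniq _ ⟨he.one_sub, ?_⟩
    rw [htn]
    refine sq_unit ?_
    have h4 : ((e + j) - (1 - e)) * ((e + j) - (1 - e))
        = ((e*e + e*e + e*e + e*e) - (e + e + e + e) + 1)
          + ((e*j + j*e) + (e*j + j*e)) - (j + j) + j * j := by noncomm_ring
    rw [h4, he', hej, hjj]; abel
  have h6 : (1:R) - (e + j) = 1 - e := c1.trans c2.symm
  have h5 : e + j = e := sub_right_injective h6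
  exact add_eq_left.mp h5

private lemma abelian_of_upc (hR : UniquelyPiClean R) : AbelianRing R := by
  intro e he x
  have he' : e * e = e := he
  -- part 1 : e*x - e*x*e = 0
  have p1 : e * x - e * x * e = 0 := by
    set j := e * x - e * x * e with hjdef
    have hje : j * e = 0 := by
      have : j * e = e * x * e - e * x * (e * e) := by rw [hjdef]; noncomm_ring
      rw [this, he', sub_self]
    have hjj : j * j = 0 := by
      have : j * j = (j * e) * x - ((j * e) * x) * e := by rw [hjdef]; noncomm_ring
      rw [this, hje, zero_mul, zero_mul, sub_self]
    have hej : e * j + j * e = j := by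
      have h1 : e * j = (e * e) * x - (e * e) * x * e := by rw [hjdef]; noncomm_ring
      rw [hje, add_zero, h1, he']
    exact uniq_j hR he hjj hej
  -- part 2 : x*e - e*x*e = 0
  have p2 : x * e - e * x * e = 0 := by
    set j := x * e - e * x * e with hjdef
    have hej0 : e * j = 0 := by
      have : e * j = e * x * e - (e * e) * x * e := by rw [hjdef]; noncomm_ring
      rw [this, he', sub_self]
    have hjj : j * j = 0 := by
      have : j * j = x * (e * j) - e * x * (e * j) := by rw [hjdef]; noncomm_ring
      rw [this, hej0, mul_zero, mul_zero, sub_self]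
    have hej : e * j + j * e = j := by
      have h1 : j * e = x * (e * e) - e * x * (e * e) := by rw [hjdef]; noncomm_ring
      rw [hej0, zero_add, h1, he', hjdef]
    exact uniq_j hR he hjj hej
  have q1 : e * x = e * x * e := sub_eq_zero.1 p1
  have q2 : x * e = e * x * e := sub_eq_zero.1 p2
  rw [q1, ← q2]

/-- A "totally non invertible" element lies in the Jacobson radical. -/
private lemma tni_mem_j (hR : UniquelyPiClean R) (hA : AbelianRing R) {b : R}
    (htni : ∀ h : R, IsIdempotentElem h → CUnit h (b * h) → h = 0) :
    b ∈ (⊥ : Ideal R).jacobson := by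
  have main : ∀ r : R, IsUnit (1 + b * r) := by
    intro r
    set c := 1 + b * r with hc
    obtain ⟨k, hk, f, ⟨hfI, hfu⟩, _⟩ := hR c
    have hf' : f * f = f := hfI
    have hfc := hA f hfI
    obtain ⟨V, hV⟩ := hfu
    set S := ∑ i ∈ Finset.range k, c ^ i with hS
    have hbrs : b * (r * S) = c ^ k - 1 := by
      have := mul_geom_sum c k
      rw [← hS] at this
      calc b * (r * S) = (b * r) * S := by rw [mul_assoc]
        _ = ((1 + b * r) - 1) * S := by noncomm_ring
        _ = (c - 1) * S := by rw [← hc]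
        _ = c ^ k - 1 := this
    set z₀ := r * S * ↑V⁻¹ * f with hz₀
    have hfz : f * z₀ = z₀ := by
      rw [hfc, hz₀, mul_assoc, hf']
    have hbfz : (b * f) * z₀ = f := by
      have e0 : (b * f) * z₀ = b * (f * z₀) := by rw [mul_assoc]
      rw [e0, hfz, hz₀]
      have e1 : b * (r * S * ↑V⁻¹ * f) = (b * (r * S)) * (↑V⁻¹ * f) := by noncomm_ring
      rw [e1, hbrs]
      have e2 : (↑V⁻¹ : R) * f = f * ↑V⁻¹ := (hfc _).symm
      rw [e2, ← mul_assoc]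
      have e3 : (c ^ k - 1) * f = (c ^ k - f) * f := by
        rw [sub_mul, sub_mul, one_mul, hf']
      rw [e3, ← hV]
      calc (↑V * f) * ↑V⁻¹ = ↑V * (f * ↑V⁻¹) := by rw [mul_assoc]
        _ = ↑V * (↑V⁻¹ * f) := by rw [hfc]
        _ = (↑V * ↑V⁻¹) * f := by rw [mul_assoc]
        _ = f := by rw [V.mul_inv, one_mul]
    have hzbf : z₀ * (b * f) = f := by
      refine df hA hfI ?_ hfz hbfz
      rw [hfc, mul_assoc, hf']
    have hf0 : f = 0 := htni f hfI ⟨z₀, hfz, hbfz, hzbf⟩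
    rw [hf0, sub_zero] at hV
    have hck : 1 ≤ k := hk
    have hpow : c ^ (k - 1) * c = c ^ k := by
      rw [← pow_succ, Nat.sub_add_cancel hck]
    have hpow' : c * c ^ (k - 1) = c ^ k := by
      rw [← pow_succ', Nat.sub_add_cancel hck]
    refine unit_of_left_right (l := ↑V⁻¹ * c ^ (k - 1)) (r := c ^ (k - 1) * ↑V⁻¹) ?_ ?_
    · rw [mul_assoc, hpow, ← hV, V.inv_mul]
    · rw [← mul_assoc, hpow', ← hV, V.mul_inv]
  rw [memJ]
  intro y
  exact unit_swap (main y)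

private lemma potency (hR : UniquelyPiClean R) (hA : AbelianRing R) (a : R) :
    ∃ n : ℕ, 2 ≤ n ∧ a ^ n - a ∈ (⊥ : Ideal R).jacobson := by
  obtain ⟨n, hn, e, ⟨heI, heu⟩, huniq⟩ := hR a
  have he' : e * e = e := heI
  have hec := hA e heI
  obtain ⟨U, hU⟩ := heu
  have hUcorner : ∀ h : R, IsIdempotentElem h → (∀ x, h * x = x * h) →
      CUnit (1 - h) ((↑U : R) * (1 - h)) := by
    intro h hh hch
    have hh1 : (1 - h) * (1 - h) = 1 - h := hh.one_sub
    have hcom : ∀ q : R, (1 - h) * q = q * (1 - h) := by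
      intro q; rw [sub_mul, mul_sub, one_mul, mul_one, hch]
    refine ⟨↑U⁻¹ * (1 - h), ?_, ?_, ?_⟩
    · rw [hcom, mul_assoc, hh1]
    · calc ↑U * (1 - h) * (↑U⁻¹ * (1 - h))
          = ↑U * ((1 - h) * ↑U⁻¹) * (1 - h) := by noncomm_ring
        _ = ↑U * (↑U⁻¹ * (1 - h)) * (1 - h) := by rw [hcom]
        _ = (↑U * ↑U⁻¹) * ((1 - h) * (1 - h)) := by noncomm_ring
        _ = 1 - h := by rw [U.mul_inv, one_mul, hh1]
    · calc ↑U⁻¹ * (1 - h) * (↑U * (1 - h))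
          = ↑U⁻¹ * ((1 - h) * ↑U) * (1 - h) := by noncomm_ring
        _ = ↑U⁻¹ * (↑U * (1 - h)) * (1 - h) := by rw [hcom]
        _ = (↑U⁻¹ * ↑U) * ((1 - h) * (1 - h)) := by noncomm_ring
        _ = 1 - h := by rw [U.inv_mul, one_mul, hh1]
  have he0 : e * (1 - e) = 0 := by rw [mul_sub, mul_one, he', sub_self]
  have hb1 : a * e ∈ (⊥ : Ideal R).jacobson := by
    refine tni_mem_j hR hA ?_
    intro h hh hcu
    have hch := hA h hh
    have hh' : h * h = h := hh
    obtain ⟨z, hz, h1, h2⟩ := hcu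
    have step : h * (1 - e) = 0 := by
      calc h * (1 - e) = (z * ((a * e) * h)) * (1 - e) := by rw [h2]
        _ = z * ((a * e) * (h * (1 - e))) := by noncomm_ring
        _ = z * ((a * e) * ((1 - e) * h)) := by rw [hch]
        _ = z * (a * ((e * (1 - e)) * h)) := by noncomm_ring
        _ = 0 := by rw [he0, zero_mul, mul_zero, mul_zero]
    have hhe : h * e = h := by
      have e1 : h * (1 - e) = h - h * e := by noncomm_ring
      rw [e1] at step
      exact (sub_eq_zero.1 step).symm
    have heh : e * h = h := by rw [← hch e]; exact hhe
    have hbh : (a * e) * h = a * h := by rw [mul_assoc, heh]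
    have hcu' : CUnit h (a * h) := by rw [← hbh]; exact ⟨z, hz, h1, h2⟩
    have hhah : h * (a * h) = a * h := by
      rw [hch (a * h), mul_assoc, hh']
    have hcupow : CUnit h ((a * h) ^ n) := cunit_pow hch hhah hcu' n hn
    have hcpow : CUnit h (a ^ n * h) := by
      rw [← pow_mul_central hh hch n hn]; exact hcupow
    have hg : IsIdempotentElem (e - h) := by
      unfold IsIdempotentElem
      have e2 : (e - h) * (e - h) = e * e - e * h - h * e + h * h := by noncomm_ring
      rw [e2, he', heh, hhe, hh']; abel
    have ht : IsUnit (a ^ n - (e - h)) := by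
      refine glue hch ?_ ?_
      · have e1 : (a ^ n - (e - h)) * h = a ^ n * h - (e * h - h * h) := by noncomm_ring
        rw [e1, heh, hh', sub_self, sub_zero]
        exact hcpow
      · have e2 : (a ^ n - (e - h)) * (1 - h)
            = (a ^ n - e) * (1 - h) + (h * 1 - h * h) := by noncomm_ring
        rw [e2, mul_one, hh', sub_self, add_zero, ← hU]
        exact hUcorner h hh hch
    have h0 : e - h = e := huniq (e - h) ⟨hg, ht⟩
    exact sub_eq_self.mp h0
  have hb2 : (a ^ n - 1) * (1 - e) ∈ (⊥ : Ideal R).jacobson := by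
    refine tni_mem_j hR hA ?_
    intro h hh hcu
    have hch := hA h hh
    have hh' : h * h = h := hh
    obtain ⟨z, hz, h1, h2⟩ := hcu
    have hb2e : ((a ^ n - 1) * (1 - e)) * e = 0 := by
      rw [mul_assoc]
      have : (1 - e) * e = 0 := by rw [sub_mul, one_mul, he', sub_self]
      rw [this, mul_zero]
    have hhe : h * e = 0 := by
      calc h * e = (z * (((a ^ n - 1) * (1 - e)) * h)) * e := by rw [h2]
        _ = z * (((a ^ n - 1) * (1 - e)) * (h * e)) := by noncomm_ring
        _ = z * (((a ^ n - 1) * (1 - e)) * (e * h)) := by rw [hch]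
        _ = z * ((((a ^ n - 1) * (1 - e)) * e) * h) := by noncomm_ring
        _ = 0 := by rw [hb2e, zero_mul, mul_zero]
    have heh : e * h = 0 := by rw [← hch e]; exact hhe
    have hbh : ((a ^ n - 1) * (1 - e)) * h = (a ^ n - 1) * h := by
      rw [mul_assoc]
      have : (1 - e) * h = h := by rw [sub_mul, one_mul, heh, sub_zero]
      rw [this]
    have hg : IsIdempotentElem (e + h) := by
      unfold IsIdempotentElem
      have e2 : (e + h) * (e + h) = e * e + e * h + h * e + h * h := by noncomm_ring
      rw [e2, he', heh, hhe, hh']; abel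
    have ht : IsUnit (a ^ n - (e + h)) := by
      refine glue hch ?_ ?_
      · have e1 : (a ^ n - (e + h)) * h
            = (a ^ n - 1) * h - e * h - (h * h - h) := by noncomm_ring
        rw [e1, heh, hh', sub_self, sub_zero, sub_zero, ← hbh]
        exact ⟨z, hz, h1, h2⟩
      · have e2 : (a ^ n - (e + h)) * (1 - h)
            = (a ^ n - e) * (1 - h) - (h * 1 - h * h) := by noncomm_ring
        rw [e2, mul_one, hh', sub_self, sub_zero, ← hU]
        exact hUcorner h hh hch
    have h0 : e + h = e := huniq (e + h) ⟨hg, ht⟩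
    exact add_eq_left.mp h0
  refine ⟨n + 1, by omega, ?_⟩
  have key : a ^ (n + 1) - a
      = (a * e) * (a ^ n - 1) + a * ((a ^ n - 1) * (1 - e)) := by
    have hced : e * (a ^ n - 1) = (a ^ n - 1) * e := hec _
    calc a ^ (n + 1) - a = a * (a ^ n - 1) := by rw [pow_succ']; noncomm_ring
      _ = a * ((a ^ n - 1) * e) + a * ((a ^ n - 1) * (1 - e)) := by noncomm_ring
      _ = a * (e * (a ^ n - 1)) + a * ((a ^ n - 1) * (1 - e)) := by rw [hced]
      _ = (a * e) * (a ^ n - 1) + a * ((a ^ n - 1) * (1 - e)) := by rw [mul_assoc]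
  rw [key]
  exact Ideal.add_mem _ (jmul_right hb1 _) (Ideal.mul_mem_left _ _ hb2)

private lemma lifting (hR : UniquelyPiClean R) (hA : AbelianRing R) (x : R)
    (hx : x - x * x ∈ (⊥ : Ideal R).jacobson) :
    ∃ e : R, IsIdempotentElem e ∧ x - e ∈ (⊥ : Ideal R).jacobson := by
  have hpow : ∀ n, 1 ≤ n → x ^ n - x ∈ (⊥ : Ideal R).jacobson := by
    intro n hn
    induction n, hn using Nat.le_induction with
    | base => rw [pow_one, sub_self]; exact Submodule.zero_mem _
    | succ m hm ih =>
      have e1 : x ^ (m + 1) - x = x * (x ^ m - x) + (x * x - x) := by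
        rw [pow_succ']; noncomm_ring
      rw [e1]
      refine Ideal.add_mem _ (Ideal.mul_mem_left _ _ ih) ?_
      have := Submodule.neg_mem _ hx
      rwa [neg_sub] at this
  obtain ⟨n, hn, e, ⟨heI, heu⟩, _⟩ := hR x
  have he' : e * e = e := heI
  have hec := hA e heI
  obtain ⟨U, hU⟩ := heu
  have h1 : x * e ∈ (⊥ : Ideal R).jacobson := by
    have key : (↑U : R) * (x * e) = (x ^ (n + 1) - x) * e := by
      rw [hU]
      have e2 : e * (x * e) = (x * e) * e := hec _
      calc (x ^ n - e) * (x * e) = x ^ n * (x * e) - e * (x * e) := by noncomm_ring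
        _ = x ^ n * (x * e) - (x * e) * e := by rw [e2]
        _ = (x ^ n * x) * e - x * (e * e) := by noncomm_ring
        _ = x ^ (n + 1) * e - x * e := by rw [← pow_succ, he']
        _ = (x ^ (n + 1) - x) * e := by noncomm_ring
    have hmem : (↑U : R) * (x * e) ∈ (⊥ : Ideal R).jacobson := by
      rw [key]; exact jmul_right (hpow (n + 1) (by omega)) e
    have e7 : x * e = ↑U⁻¹ * (↑U * (x * e)) := by rw [← mul_assoc, U.inv_mul, one_mul]
    rw [e7]
    exact Ideal.mul_mem_left _ _ hmem
  have h2 : (1 - x) * (1 - e) ∈ (⊥ : Ideal R).jacobson := by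
    have key : (↑U : R) * ((1 - x) * (1 - e)) = -((x ^ (n + 1) - x ^ n) * (1 - e)) := by
      rw [hU]
      have e3 : e * ((1 - x) * (1 - e)) = 0 := by
        have e4 : e * (1 - x) = (1 - x) * e := hec _
        calc e * ((1 - x) * (1 - e)) = (e * (1 - x)) * (1 - e) := by rw [mul_assoc]
          _ = ((1 - x) * e) * (1 - e) := by rw [e4]
          _ = (1 - x) * (e * (1 - e)) := by rw [mul_assoc]
          _ = 0 := by rw [mul_sub, mul_one, he', sub_self, mul_zero]
      calc (x ^ n - e) * ((1 - x) * (1 - e))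
          = x ^ n * ((1 - x) * (1 - e)) - e * ((1 - x) * (1 - e)) := by noncomm_ring
        _ = x ^ n * ((1 - x) * (1 - e)) := by rw [e3, sub_zero]
        _ = (x ^ n - x ^ n * x) * (1 - e) := by noncomm_ring
        _ = (x ^ n - x ^ (n + 1)) * (1 - e) := by rw [← pow_succ]
        _ = -((x ^ (n + 1) - x ^ n) * (1 - e)) := by noncomm_ring
    have hd : x ^ (n + 1) - x ^ n ∈ (⊥ : Ideal R).jacobson := by
      have e5 : x ^ (n + 1) - x ^ n = (x ^ (n + 1) - x) - (x ^ n - x) := by abel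
      rw [e5]
      exact Submodule.sub_mem _ (hpow (n + 1) (by omega)) (hpow n hn)
    have hmem : (↑U : R) * ((1 - x) * (1 - e)) ∈ (⊥ : Ideal R).jacobson := by
      rw [key]; exact Submodule.neg_mem _ (jmul_right hd _)
    have e7 : (1 - x) * (1 - e) = ↑U⁻¹ * (↑U * ((1 - x) * (1 - e))) := by
      rw [← mul_assoc, U.inv_mul, one_mul]
    rw [e7]
    exact Ideal.mul_mem_left _ _ hmem
  refine ⟨1 - e, heI.one_sub, ?_⟩
  have e6 : x - (1 - e) = x * e - (1 - x) * (1 - e) := by noncomm_ring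
  rw [e6]
  exact Submodule.sub_mem _ h1 h2

end main

theorem stmt8 {R : Type*} [Ring R] :
    UniquelyPiClean R ↔
      (AbelianRing R ∧
        (∀ x : R, x - x * x ∈ (⊥ : Ideal R).jacobson →
          ∃ e : R, IsIdempotentElem e ∧ x - e ∈ (⊥ : Ideal R).jacobson) ∧
        (∀ a : R, ∃ n : ℕ, 2 ≤ n ∧ a ^ n - a ∈ (⊥ : Ideal R).jacobson)) := by
  constructor
  · intro hR
    have hA := abelian_of_upc hR
    exact ⟨hA, fun x hx => lifting hR hA x hx, fun a => potency hR hA a⟩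
  · rintro ⟨hA, hlift, hpot⟩
    intro a
    obtain ⟨n, hn2, hd⟩ := hpot a
    obtain ⟨m, rfl⟩ : ∃ m, n = m + 2 := ⟨n - 2, by omega⟩
    have hxx : a ^ (m + 1) - a ^ (m + 1) * a ^ (m + 1) ∈ (⊥ : Ideal R).jacobson := by
      have p1 : a ^ (m + 1) * a ^ (m + 1) = a ^ m * a ^ (m + 2) := by
        rw [← pow_add, ← pow_add]; congr 1; omega
      have p2 : a ^ m * a = a ^ (m + 1) := by rw [← pow_succ]
      have e1 : a ^ (m + 1) - a ^ (m + 1) * a ^ (m + 1)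
          = -(a ^ m * (a ^ (m + 2) - a)) := by
        rw [p1, mul_sub, p2]; abel
      rw [e1]
      exact Submodule.neg_mem _ (Ideal.mul_mem_left _ _ hd)
    obtain ⟨e, heI, hj⟩ := hlift (a ^ (m + 1)) hxx
    set x := a ^ (m + 1) with hxd
    have he' : e * e = e := heI
    refine ⟨m + 1, by omega, ?_⟩
    unfold UniquelyCleanElem
    have hs : (e + e - 1) * (e + e - 1) = 1 := by
      have e2 : (e + e - 1) * (e + e - 1)
          = (e * e + e * e + e * e + e * e) - (e + e + e + e) + 1 := by noncomm_ring
      rw [e2, he']; abel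
    refine ⟨1 - e, ⟨⟨heI.one_sub, ?_⟩, ?_⟩⟩
    · have hu := unit_add_j (sq_unit hs) hj
      have e3 : (e + e - 1) + (x - e) = x - (1 - e) := by abel
      rwa [e3] at hu
    · rintro g ⟨hgI, hgu⟩
      have hgc := hA g hgI
      have hg' : g * g = g := hgI
      obtain ⟨W, hW⟩ := hgu
      have k1 : g * (e * g) = e * g := by
        rw [hgc (e * g), mul_assoc, hg']
      have key : (↑W : R) * (e * g) = (x - e) * (e * g) := by
        rw [hW]
        calc (x - g) * (e * g) = x * (e * g) - g * (e * g) := by noncomm_ring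
          _ = x * (e * g) - e * g := by rw [k1]
          _ = (x - e) * (e * g) + (e * (e * g) - e * g) := by noncomm_ring
          _ = (x - e) * (e * g) := by
              rw [show e * (e * g) = e * g from by rw [← mul_assoc, he'], sub_self, add_zero]
      have mem : e * g ∈ (⊥ : Ideal R).jacobson := by
        have h8 : (↑W⁻¹ : R) * ((x - e) * (e * g)) ∈ (⊥ : Ideal R).jacobson :=
          Ideal.mul_mem_left _ _ (jmul_right hj _)
        rwa [← key, ← mul_assoc, W.inv_mul, one_mul] at h8
      have hegI : IsIdempotentElem (e * g) := by
        unfold IsIdempotentElem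
        calc (e * g) * (e * g) = e * (g * (e * g)) := by noncomm_ring
          _ = e * (e * g) := by rw [k1]
          _ = e * g := by rw [← mul_assoc, he']
      have heg0 : e * g = 0 := jidem_zero hegI mem
      have k2 : g * ((1 - e) * (1 - g)) = 0 := by
        calc g * ((1 - e) * (1 - g)) = (g * (1 - e)) * (1 - g) := by rw [mul_assoc]
          _ = ((1 - e) * g) * (1 - g) := by rw [hgc (1 - e)]
          _ = (1 - e) * (g * (1 - g)) := by rw [mul_assoc]
          _ = 0 := by rw [mul_sub, mul_one, hg', sub_self, mul_zero]
      have k3 : e * ((1 - e) * (1 - g)) = 0 := by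
        rw [← mul_assoc]
        have e4 : e * (1 - e) = 0 := by rw [mul_sub, mul_one, he', sub_self]
        rw [e4, zero_mul]
      have key2 : (↑W : R) * ((1 - e) * (1 - g)) = (x - e) * ((1 - e) * (1 - g)) := by
        rw [hW]
        calc (x - g) * ((1 - e) * (1 - g))
            = x * ((1 - e) * (1 - g)) - g * ((1 - e) * (1 - g)) := by noncomm_ring
          _ = x * ((1 - e) * (1 - g)) := by rw [k2, sub_zero]
          _ = (x - e) * ((1 - e) * (1 - g)) + e * ((1 - e) * (1 - g)) := by noncomm_ring
          _ = (x - e) * ((1 - e) * (1 - g)) := by rw [k3, add_zero]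
      have mem2 : (1 - e) * (1 - g) ∈ (⊥ : Ideal R).jacobson := by
        have h9 : (↑W⁻¹ : R) * ((x - e) * ((1 - e) * (1 - g))) ∈ (⊥ : Ideal R).jacobson :=
          Ideal.mul_mem_left _ _ (jmul_right hj _)
        rwa [← key2, ← mul_assoc, W.inv_mul, one_mul] at h9
      have hg1 : (1 - g) * (1 - g) = 1 - g := hgI.one_sub
      have he1 : (1 - e) * (1 - e) = 1 - e := heI.one_sub
      have c1 : (1 - g) * (1 - e) = (1 - e) * (1 - g) := by
        have e8 : (1 - g) * (1 - e) = 1 - g - e + g * e := by noncomm_ring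
        have e9 : (1 - e) * (1 - g) = 1 - e - g + e * g := by noncomm_ring
        rw [e8, e9, hgc e]; abel
      have hqI : IsIdempotentElem ((1 - e) * (1 - g)) := by
        unfold IsIdempotentElem
        calc ((1 - e) * (1 - g)) * ((1 - e) * (1 - g))
            = (1 - e) * (((1 - g) * (1 - e)) * (1 - g)) := by noncomm_ring
          _ = (1 - e) * (((1 - e) * (1 - g)) * (1 - g)) := by rw [c1]
          _ = (1 - e) * ((1 - e) * ((1 - g) * (1 - g))) := by rw [mul_assoc]
          _ = (1 - e) * ((1 - e) * (1 - g)) := by rw [hg1]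
          _ = ((1 - e) * (1 - e)) * (1 - g) := by rw [mul_assoc]
          _ = (1 - e) * (1 - g) := by rw [he1]
      have q0 : (1 - e) * (1 - g) = 0 := jidem_zero hqI mem2
      have e10 : (1 - e) * (1 - g) = 1 - e - g + e * g := by noncomm_ring
      rw [e10, heg0, add_zero] at q0
      have : (1 : R) - e = g := by
        have e11 : (1 : R) - e - g = (1 - e) - g := by abel
        rw [e11] at q0
        exact sub_eq_zero.1 q0
      exact this.symm
end

section
/- If R is uniquely π-clean, then J(R) = { x ∈ R : xᵐ − 1 is a unit for all m ≥ 1 }. -/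
section aux
variable {R : Type*} [Ring R]

lemma upc_aux1 (h : UniquelyPiClean R) (e q : R) (he : e*e = e) (heq : e*q = q)
    (hqe : q*e = 0) (hqq : q*q = 0) : q = 0 := by
  have haa : (e+q)*(e+q) = e+q := by
    have H : (e+q)*(e+q) = (e*e - e) + (e*q - q) + q*e + q*q + (e + q) := by noncomm_ring
    rw [H, he, heq, hqe, hqq]; noncomm_ring
  have hapow : ∀ m : ℕ, (e+q)^(m+1) = e+q := by
    intro m
    induction m with
    | zero => simp
    | succ m ih => rw [pow_succ, ih, haa]
  obtain ⟨n, hn, uc⟩ := h (e + q)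
  obtain ⟨E, _, huniq⟩ := uc
  have hA : (e+q)^n = e+q := by
    obtain ⟨m, rfl⟩ : ∃ m, n = m + 1 := ⟨n - 1, by omega⟩
    exact hapow m
  have cand1 : (1 - (e+q)) = E := by
    apply huniq
    constructor
    · show (1 - (e+q)) * (1 - (e+q)) = 1 - (e+q)
      have H : (1 - (e+q)) * (1 - (e+q)) = ((e+q)*(e+q) - (e+q)) + (1 - (e+q)) := by
        noncomm_ring
      rw [H, haa]; noncomm_ring
    · rw [hA]
      have hww : ((e+q) - (1 - (e+q))) * ((e+q) - (1 - (e+q))) = 1 := by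
        have H : ((e+q) - (1 - (e+q))) * ((e+q) - (1 - (e+q)))
            = ((e+q)*(e+q) - (e+q))*4 + 1 := by noncomm_ring
        rw [H, haa]; noncomm_ring
      exact ⟨⟨_, _, hww, hww⟩, rfl⟩
  have cand2 : (1 - e) = E := by
    apply huniq
    constructor
    · show (1 - e) * (1 - e) = 1 - e
      have H : (1 - e) * (1 - e) = (e*e - e) + (1 - e) := by noncomm_ring
      rw [H, he]; noncomm_ring
    · rw [hA]
      have hww : ((e+q) - (1 - e)) * ((e+q) - (1 - e)) = 1 := by
        have H : ((e+q) - (1 - e)) * ((e+q) - (1 - e))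
            = (e*e - e)*4 + (e*q - q)*2 + (q*e)*2 + q*q + 1 := by noncomm_ring
        rw [H, he, heq, hqe, hqq]; noncomm_ring
      exact ⟨⟨_, _, hww, hww⟩, rfl⟩
  have : 1 - (e+q) = 1 - e := by rw [cand1, cand2]
  have h2 : e + q = e := by
    have := sub_right_inj.mp this
    exact this
  exact (add_eq_left).mp h2

lemma upc_abelian (h : UniquelyPiClean R) : AbelianRing R := by
  have main : ∀ e x : R, e*e = e → e*x - e*x*e = 0 := by
    intro e x he
    apply upc_aux1 h e _ he
    · have : e * (e*x - e*x*e) = e*x - e*x*e := by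
        rw [mul_sub, ← mul_assoc, he, ← mul_assoc, ← mul_assoc, he]
      exact this
    · have : (e*x - e*x*e) * e = 0 := by
        rw [sub_mul, mul_assoc (e*x) e e, he, sub_self]
      exact this
    · have heq2 : e * (e*x - e*x*e) = e*x - e*x*e := by
        rw [mul_sub, ← mul_assoc, he, ← mul_assoc, ← mul_assoc, he]
      have H : (e*x - e*x*e) * (e*x - e*x*e)
          = (e*x) * (e*x - e*x*e) - (e*x) * (e * (e*x - e*x*e)) := by
        rw [sub_mul, mul_assoc (e*x) e (e*x - e*x*e)]
      rw [H, heq2, sub_self]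
  intro e hei x
  have he : e*e = e := hei
  have t1 : e*x - e*x*e = 0 := main e x he
  have he' : (1-e)*(1-e) = 1-e := by
    have H : (1-e)*(1-e) = (e*e - e) + (1 - e) := by noncomm_ring
    rw [H, he]; noncomm_ring
  have t2 : (1-e)*x - (1-e)*x*(1-e) = 0 := main (1-e) x he'
  have : e*x - x*e = (e*x - e*x*e) - ((1-e)*x - (1-e)*x*(1-e)) := by noncomm_ring
  rw [t1, t2] at this
  have : e*x - x*e = 0 := by rw [this]; noncomm_ring
  exact sub_eq_zero.mp this
end aux

section key
variable {R : Type*} [Ring R]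

/-- If `g` is a central idempotent, all `x^m - 1` are units, and `g*x` is invertible
in the corner ring `gRg`, then `g = 0`. -/
lemma upc_key (h : UniquelyPiClean R) (x g s : R)
    (hx : ∀ m : ℕ, 1 ≤ m → IsUnit (x^m - 1))
    (hgi : g*g = g) (hgc : ∀ r : R, g*r = r*g)
    (h1 : (g*x)*s = g) (h2 : s*(g*x) = g) (hgs : g*s = s) : g = 0 := by
  have hgpow : ∀ m : ℕ, g * (g*x)^(m+1) = (g*x)^(m+1) := by
    intro m
    induction m with
    | zero => rw [pow_one, ← mul_assoc, hgi]
    | succ m ih => rw [pow_succ, ← mul_assoc, ih]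
  have hspow : ∀ m : ℕ, g * s^(m+1) = s^(m+1) := by
    intro m
    induction m with
    | zero => rw [pow_one]; exact hgs
    | succ m ih => rw [pow_succ, ← mul_assoc, ih]
  have hMw : ∀ m : ℕ, (g*x)^(m+1) * s^(m+1) = g := by
    intro m
    induction m with
    | zero => simpa using h1
    | succ m ih =>
      rw [pow_succ (g*x) (m+1), pow_succ' s (m+1), mul_assoc ((g*x)^(m+1)) (g*x) _,
        ← mul_assoc (g*x) s _, h1, hspow, ih]
  have hwM : ∀ m : ℕ, s^(m+1) * (g*x)^(m+1) = g := by
    intro m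
    induction m with
    | zero => simpa using h2
    | succ m ih =>
      rw [pow_succ s (m+1), pow_succ' (g*x) (m+1), mul_assoc (s^(m+1)) s _,
        ← mul_assoc s (g*x) _, h2, hgpow, ih]
  have hpow : ∀ m : ℕ, (g*x)^(m+1) = g * x^(m+1) := by
    intro m
    induction m with
    | zero => simp
    | succ m ih =>
      rw [pow_succ (g*x) (m+1), ih, pow_succ x (m+1), mul_assoc g (x^(m+1)) (g*x),
        ← mul_assoc (x^(m+1)) g x, ← hgc (x^(m+1)), ← mul_assoc g (g * x^(m+1)) x,
        ← mul_assoc g g (x^(m+1)), hgi, mul_assoc]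
  obtain ⟨k, hk, uc⟩ := h (g*x)
  obtain ⟨E, _, huniq⟩ := uc
  obtain ⟨m, rfl⟩ : ∃ m, k = m + 1 := ⟨k - 1, by omega⟩
  have hMw' : (g*x)^(m+1) * s^(m+1) = g := hMw m
  have hwM' : s^(m+1) * (g*x)^(m+1) = g := hwM m
  have hgM : g * (g*x)^(m+1) = (g*x)^(m+1) := hgpow m
  have hMg : (g*x)^(m+1) * g = (g*x)^(m+1) := by rw [← hgc, hgM]
  have hgw : g * s^(m+1) = s^(m+1) := hspow m
  have idem1 : (1 - g) * (1 - g) = 1 - g := by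
    have H : (1-g)*(1-g) = (g*g - g) + (1 - g) := by noncomm_ring
    rw [H, hgi]; noncomm_ring
  have unit1 : IsUnit ((g*x)^(m+1) - (1 - g)) := by
    have e1 : ((g*x)^(m+1) - (1-g)) * (s^(m+1) - (1-g)) = 1 := by
      have H : ((g*x)^(m+1) - (1-g)) * (s^(m+1) - (1-g))
          = (g*x)^(m+1)*s^(m+1) + ((g*x)^(m+1)*g - (g*x)^(m+1))
            + (g*s^(m+1) - s^(m+1)) + (g*g - g) + (1 - g) := by noncomm_ring
      rw [H, hMw', hMg, hgw, hgi]; noncomm_ring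
    have e2 : (s^(m+1) - (1-g)) * ((g*x)^(m+1) - (1-g)) = 1 := by
      have hwg : s^(m+1) * g = s^(m+1) := by rw [← hgc, hgw]
      have H : (s^(m+1) - (1-g)) * ((g*x)^(m+1) - (1-g))
          = s^(m+1)*(g*x)^(m+1) + (s^(m+1)*g - s^(m+1))
            + (g*(g*x)^(m+1) - (g*x)^(m+1)) + (g*g - g) + (1 - g) := by noncomm_ring
      rw [H, hwM', hwg, hgM, hgi]; noncomm_ring
    exact ⟨⟨_, _, e1, e2⟩, rfl⟩
  have cand1 : (1 - g) = E := huniq (1-g) ⟨idem1, unit1⟩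
  obtain ⟨u, hu⟩ := hx (m+1) (by omega)
  have hMform : (g*x)^(m+1) - 1 = g*(↑u : R) - (1 - g) := by
    rw [hpow m, hu]; noncomm_ring
  have key0 : ∀ c d : R, c * d = 1 → (g*c)*(g*d) = g := by
    intro c d hcd
    rw [mul_assoc g c (g*d), ← mul_assoc c g d, ← hgc c, ← mul_assoc g (g*c) d,
      ← mul_assoc g g c, hgi, mul_assoc g c d, hcd, mul_one]
  have key2 : ∀ c : R, (g*c) * (1 - g) = 0 := by
    intro c
    rw [mul_sub, mul_one, mul_assoc, ← hgc c, ← mul_assoc, hgi, sub_self]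
  have key3 : ∀ c : R, (1 - g) * (g*c) = 0 := by
    intro c
    rw [sub_mul, one_mul, ← mul_assoc, hgi, sub_self]
  have expand : ∀ A B C : R, (A - B)*(C - B) = A*C - A*B - B*C + B*B := by
    intro A B C; noncomm_ring
  have unit2 : IsUnit ((g*x)^(m+1) - 1) := by
    rw [hMform]
    have e1 : (g*(↑u:R) - (1-g)) * (g*(↑u⁻¹:R) - (1-g)) = 1 := by
      rw [expand, key0 _ _ u.mul_inv, key2, key3, idem1]; noncomm_ring
    have e2 : (g*(↑u⁻¹:R) - (1-g)) * (g*(↑u:R) - (1-g)) = 1 := by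
      rw [expand, key0 _ _ u.inv_mul, key2, key3, idem1]; noncomm_ring
    exact ⟨⟨_, _, e1, e2⟩, rfl⟩
  have cand2 : (1 : R) = E := huniq 1 ⟨mul_one 1, by simpa using unit2⟩
  have : (1 : R) - g = 1 := by rw [cand1, cand2]
  have := sub_eq_self.mp this
  simpa using this
end key

section main
variable {R : Type*} [Ring R]

lemma upc_binom (w : R) (k : ℕ) : ∃ B : R, Commute w B ∧ (w+1)^k = 1 + w*B := by
  induction k with
  | zero => exact ⟨0, Commute.zero_right w, by simp⟩
  | succ k ih =>
    obtain ⟨B, hc, hB⟩ := ih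
    refine ⟨1 + B*w + B, ?_, ?_⟩
    · have h1 : Commute w (B*w) := (hc.mul_right (Commute.refl w))
      exact ((Commute.one_right w).add_right h1).add_right hc
    · rw [pow_succ, hB]
      have : (1 + w*B) * (w + 1) = 1 + w*(1 + B*w + B) := by
        rw [mul_add, mul_one, add_mul, one_mul, mul_add, mul_add, mul_one,
          mul_assoc w B w]
        abel
      rw [this]

lemma upc_unit_add_one (h : UniquelyPiClean R) {x : R}
    (hx : ∀ m : ℕ, 1 ≤ m → IsUnit (x^m - 1)) (y : R) : IsUnit (y*x + 1) := by
  have habel := upc_abelian h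
  obtain ⟨k, hk, uc⟩ := h (y*x + 1)
  obtain ⟨f, ⟨hfi0, hfu⟩, _⟩ := uc
  have hfi : f*f = f := hfi0
  have hfc : ∀ r : R, f*r = r*f := habel f hfi0
  obtain ⟨B, hWB, hbin⟩ := upc_binom (y*x) k
  obtain ⟨v, hv⟩ := hfu
  -- b is a corner inverse candidate for f*x
  set b : R := ↑v⁻¹*(B*(y*f)) with hbdef
  have h2' : b*(f*x) = f := by
    have stepA : (y*f)*(f*x) = (y*x)*f := by
      rw [mul_assoc y f (f*x), ← mul_assoc f f x, hfi, hfc x, ← mul_assoc]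
    have stepB : (y*x)*B = ↑v + (f - 1) := by
      have hWBval : (y*x)*B = (y*x+1)^k - 1 := by rw [hbin]; noncomm_ring
      rw [hWBval, hv]
      noncomm_ring
    have stepB' : B*((y*x)*f) = ↑v*f := by
      rw [← mul_assoc B (y*x) f, ← hWB.eq, stepB, add_mul, sub_mul, one_mul, hfi]
      simp
    rw [hbdef, mul_assoc (↑v⁻¹:R) (B*(y*f)) (f*x), mul_assoc B (y*f) (f*x), stepA,
      stepB', ← mul_assoc, v.inv_mul, one_mul]
  have hfb : f*b = b := by
    rw [hfc b, hbdef, mul_assoc (↑v⁻¹:R) (B*(y*f)) f, mul_assoc B (y*f) f,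
      mul_assoc y f f, hfi]
  -- Dedekind-finiteness in the corner: also (f*x)*b = f
  have haf : (f*x)*f = f*x := by rw [mul_assoc, ← hfc x, ← mul_assoc, hfi]
  have hee : ((f*x)*b)*((f*x)*b) = (f*x)*b := by
    have H : ((f*x)*b)*((f*x)*b) = (f*x)*((b*(f*x))*b) := by noncomm_ring
    rw [H, h2', ← mul_assoc, haf]
  have hec : ∀ r : R, ((f*x)*b)*r = r*((f*x)*b) := habel _ hee
  have hef : ((f*x)*b)*f = (f*x)*b := by
    rw [mul_assoc (f*x) b f, ← hfc b, hfb]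
  have hfe : f*((f*x)*b) = f := by
    have H : b*((f*x)*((f*x)*b)) = b*(((f*x)*b)*(f*x)) := by
      rw [← hec (f*x)]
    have H2 : b*(((f*x)*b)*(f*x)) = (b*(f*x))*(b*(f*x)) := by noncomm_ring
    have H3 : b*((f*x)*((f*x)*b)) = (b*(f*x))*((f*x)*b) := by noncomm_ring
    have H4 : (b*(f*x))*((f*x)*b) = (b*(f*x))*(b*(f*x)) := by rw [← H3, H, H2]
    rw [h2'] at H4
    rw [H4, hfi]
  have h1' : (f*x)*b = f := by
    have := hfe
    rw [hfc ((f*x)*b)] at this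
    rw [← hef, this]
  have hf0 : f = 0 := upc_key h x f b hx hfi hfc h1' h2' hfb
  -- now (y*x+1)^k is a unit
  rw [hf0, sub_zero] at hv
  obtain ⟨m, rfl⟩ : ∃ m, k = m + 1 := ⟨k - 1, by omega⟩
  have hcz : Commute (y*x+1) (↑v : R) := by
    rw [hv]; exact (Commute.refl _).pow_right _
  have hcz' : Commute (y*x+1) (↑v⁻¹ : R) := hcz.units_inv_right
  have e1 : (y*x+1)*((y*x+1)^m*↑v⁻¹) = 1 := by
    rw [← mul_assoc, ← pow_succ', ← hv, v.mul_inv]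
  have e2 : ((y*x+1)^m*(↑v⁻¹:R))*(y*x+1) = 1 := by
    rw [mul_assoc, ← hcz'.eq, ← mul_assoc, ← pow_succ, ← hv, v.mul_inv]
  exact ⟨⟨_, _, e1, e2⟩, rfl⟩
end main

theorem stmt9 {R : Type*} [Ring R] (h : UniquelyPiClean R) :
    ∀ x : R, x ∈ (⊥ : Ideal R).jacobson ↔ ∀ m : ℕ, 1 ≤ m → IsUnit (x ^ m - 1) := by
  intro x
  constructor
  · intro hj m hm
    have hxm : x^m ∈ (⊥ : Ideal R).jacobson := by
      obtain ⟨n, rfl⟩ : ∃ n, m = n + 1 := ⟨m - 1, by omega⟩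
      rw [pow_succ]
      exact Ideal.mul_mem_left _ _ hj
    have L1 : ∀ a : R, a ∈ (⊥ : Ideal R).jacobson → ∃ z : R, z*(1-a) = 1 := by
      intro a ha
      obtain ⟨z, hz⟩ := Ideal.mem_jacobson_iff.mp ha (-1)
      rw [Ideal.mem_bot] at hz
      refine ⟨z, ?_⟩
      have : z*(1-a) = z*(-1)*a + z - 1 + 1 := by noncomm_ring
      rw [this, hz, zero_add]
    obtain ⟨z, hza⟩ := L1 (x^m) hxm
    have hmem : -(z*x^m) ∈ (⊥ : Ideal R).jacobson :=
      neg_mem (Ideal.mul_mem_left _ _ hxm)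
    obtain ⟨w, hw⟩ := L1 _ hmem
    have hwz : w*z = 1 := by
      have hz1 : z = 1 - -(z*x^m) := by
        have : z*(1-x^m) = z - z*x^m := by noncomm_ring
        rw [this] at hza
        rw [sub_neg_eq_add]
        exact eq_add_of_sub_eq hza
      rw [← hz1] at hw
      exact hw
    have hinv : (1-x^m)*z = 1 := by
      have : w = 1 - x^m := by
        have H : w*(z*(1-x^m)) = (w*z)*(1-x^m) := by noncomm_ring
        rw [hza, hwz, mul_one, one_mul] at H
        exact H
      rw [← this, hwz]
    have : IsUnit (1 - x^m) := ⟨⟨_, z, hinv, hza⟩, rfl⟩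
    have := this.neg
    simpa using this
  · intro hx
    rw [Ideal.mem_jacobson_iff]
    intro y
    obtain ⟨u, hu⟩ := upc_unit_add_one h hx y
    refine ⟨↑u⁻¹, ?_⟩
    rw [Ideal.mem_bot]
    have H : (↑u⁻¹:R)*y*x + ↑u⁻¹ - 1 = (↑u⁻¹:R)*(y*x+1) - 1 := by noncomm_ring
    rw [H, ← hu, u.inv_mul, sub_self]
end

section
/- In an abelian exchange ring R, an element x satisfies RxR = R if and only if x is a unit. -/
/-- A ring is an exchange ring if for every a there is an idempotent
e ∈ aR with 1 - e ∈ (1 - a)R. -/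
def ExchangeRing (R : Type*) [Ring R] : Prop :=
  ∀ a : R, ∃ e : R, IsIdempotentElem e ∧ (∃ r : R, e = a * r) ∧
    (∃ s : R, 1 - e = (1 - a) * s)

section Aux

variable {R : Type*} [Ring R]

/-- Abelian rings are directly finite. -/
lemma aux_df (hab : AbelianRing R) {a b : R} (h : a * b = 1) : b * a = 1 := by
  have he : IsIdempotentElem (b * a) := by
    show b * a * (b * a) = b * a
    rw [mul_assoc, ← mul_assoc a b a, h, one_mul]
  have hb : b * a * b = b := by rw [mul_assoc, h, mul_one]
  calc b * a = (b * a) * (a * b) := by rw [h, mul_one]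
    _ = ((b * a) * a) * b := by simp only [mul_assoc]
    _ = (a * (b * a)) * b := by rw [hab _ he a]
    _ = a * (b * a * b) := by simp only [mul_assoc]
    _ = a * b := by rw [hb]
    _ = 1 := h

lemma aux_unit_left (hab : AbelianRing R) {a x : R} (h : IsUnit (a * x)) : IsUnit x := by
  obtain ⟨u, hu⟩ := h
  have h1 : (↑u⁻¹ * a) * x = 1 := by rw [mul_assoc, ← hu]; exact u.inv_mul
  exact ⟨⟨x, ↑u⁻¹ * a, aux_df hab h1, h1⟩, rfl⟩

lemma aux_unit_right (hab : AbelianRing R) {a x : R} (h : IsUnit (x * a)) : IsUnit x := by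
  obtain ⟨u, hu⟩ := h
  have h1 : x * (a * ↑u⁻¹) = 1 := by rw [← mul_assoc, ← hu]; exact u.mul_inv
  exact ⟨⟨x, a * ↑u⁻¹, h1, aux_df hab h1⟩, rfl⟩

/-- In an abelian exchange ring with only trivial idempotents, `a` or `1 - a` is a unit. -/
lemma aux_unit_or (hab : AbelianRing R) (hex : ExchangeRing R)
    (htriv : ∀ g : R, IsIdempotentElem g → g = 0 ∨ g = 1) (a : R) :
    IsUnit a ∨ IsUnit (1 - a) := by
  obtain ⟨e, he, ⟨r, hr⟩, ⟨s, hs⟩⟩ := hex a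
  rcases htriv e he with h0 | h1
  · right
    rw [h0, sub_zero] at hs
    exact ⟨⟨1 - a, s, hs.symm, aux_df hab hs.symm⟩, rfl⟩
  · left
    rw [h1] at hr
    exact ⟨⟨a, r, hr.symm, aux_df hab hr.symm⟩, rfl⟩

lemma aux_nonunit_add (hab : AbelianRing R) (hex : ExchangeRing R)
    (htriv : ∀ g : R, IsIdempotentElem g → g = 0 ∨ g = 1) {a b : R}
    (ha : ¬ IsUnit a) (hb : ¬ IsUnit b) : ¬ IsUnit (a + b) := by
  intro h
  obtain ⟨u, hu⟩ := h
  have hsum : ↑u⁻¹ * a + ↑u⁻¹ * b = 1 := by rw [← mul_add, ← hu]; exact u.inv_mul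
  rcases aux_unit_or hab hex htriv (↑u⁻¹ * a) with hc | hc
  · exact ha (aux_unit_left hab hc)
  · have h2 : (1 : R) - ↑u⁻¹ * a = ↑u⁻¹ * b := by rw [← hsum]; abel
    rw [h2] at hc
    exact hb (aux_unit_left hab hc)

/-- The preimage of the "eigen-ideal" of a central element. -/
lemma exists_centIdeal {A : Type*} [Ring A] (π : R →+* A) (g : A)
    (hc : ∀ z : A, g * z = z * g) :
    ∃ I : TwoSidedIdeal R, ∀ z : R, z ∈ I ↔ g * π z = π z := by
  refine ⟨TwoSidedIdeal.mk' {z | g * π z = π z} ?_ ?_ ?_ ?_ ?_,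
    fun z => TwoSidedIdeal.mem_mk' _ _ _ _ _ _ z⟩
  · show g * π 0 = π 0
    rw [map_zero, mul_zero]
  · intro p q hp hq
    have hp' : g * π p = π p := hp
    have hq' : g * π q = π q := hq
    show g * π (p + q) = π (p + q)
    rw [map_add, mul_add, hp', hq']
  · intro p hp
    have hp' : g * π p = π p := hp
    show g * π (-p) = π (-p)
    rw [map_neg, mul_neg, hp']
  · intro p q hq
    have hq' : g * π q = π q := hq
    show g * π (p * q) = π (p * q)
    rw [map_mul, ← mul_assoc, hc (π p), mul_assoc, hq']
  · intro p q hp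
    have hp' : g * π p = π p := hp
    show g * π (p * q) = π (p * q)
    rw [map_mul, ← mul_assoc, hp']

lemma quot_surj (M : TwoSidedIdeal R) : Function.Surjective M.ringCon.mk' :=
  fun z => Quotient.inductionOn' z (fun a => ⟨a, rfl⟩)

lemma quot_mem (M : TwoSidedIdeal R) {z : R} : M.ringCon.mk' z = 0 ↔ z ∈ M := by
  rw [← TwoSidedIdeal.mem_ker, TwoSidedIdeal.ker_ringCon_mk']

lemma quot_exchange (hex : ExchangeRing R) (M : TwoSidedIdeal R) :
    ExchangeRing M.ringCon.Quotient := by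
  intro a'
  obtain ⟨a, rfl⟩ := quot_surj M a'
  obtain ⟨e, he, ⟨r, hr⟩, ⟨s, hs⟩⟩ := hex a
  refine ⟨M.ringCon.mk' e, ?_, ⟨M.ringCon.mk' r, by rw [← map_mul, ← hr]⟩,
    ⟨M.ringCon.mk' s, ?_⟩⟩
  · show _ * _ = _
    rw [← map_mul, he.eq]
  · calc 1 - M.ringCon.mk' e = M.ringCon.mk' (1 - e) := by rw [map_sub, map_one]
      _ = M.ringCon.mk' ((1 - a) * s) := by rw [hs]
      _ = (1 - M.ringCon.mk' a) * M.ringCon.mk' s := by rw [map_mul, map_sub, map_one]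

lemma quot_abelian (hab : AbelianRing R) (hex : ExchangeRing R) (M : TwoSidedIdeal R) :
    AbelianRing M.ringCon.Quotient := by
  intro e' he' y'
  obtain ⟨a, rfl⟩ := quot_surj M e'
  obtain ⟨y, rfl⟩ := quot_surj M y'
  have ha : a * a - a ∈ M := by
    apply (quot_mem M).1
    rw [map_sub, map_mul, he'.eq, sub_self]
  have ha' : a - a * a ∈ M := by
    rw [← neg_sub (a * a) a]
    exact M.neg_mem ha
  obtain ⟨e, he, ⟨r, hr⟩, ⟨s, hs⟩⟩ := hex a
  have h1 : e - a * e ∈ M := by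
    have heq : e - a * e = (a - a * a) * r := by
      calc e - a * e = (1 - a) * e := by noncomm_ring
        _ = (1 - a) * (a * r) := by rw [← hr]
        _ = (a - a * a) * r := by noncomm_ring
    rw [heq]
    exact M.mul_mem_right _ _ ha'
  have h2 : a - a * e ∈ M := by
    have heq : a - a * e = (a - a * a) * s := by
      calc a - a * e = a * (1 - e) := by noncomm_ring
        _ = a * ((1 - a) * s) := by rw [hs]
        _ = (a - a * a) * s := by noncomm_ring
    rw [heq]
    exact M.mul_mem_right _ _ ha'
  have h3 : e - a ∈ M := by
    have heq : e - a = (e - a * e) - (a - a * e) := by abel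
    rw [heq]
    exact M.sub_mem h1 h2
  have hpe : M.ringCon.mk' e = M.ringCon.mk' a := by
    have h0 : M.ringCon.mk' (e - a) = 0 := (quot_mem M).2 h3
    rwa [map_sub, sub_eq_zero] at h0
  calc M.ringCon.mk' a * M.ringCon.mk' y = M.ringCon.mk' (e * y) := by rw [← hpe, map_mul]
    _ = M.ringCon.mk' (y * e) := by rw [hab e he y]
    _ = M.ringCon.mk' y * M.ringCon.mk' a := by rw [map_mul, hpe]

end Aux

theorem stmt12 {R : Type*} [Ring R] (hab : AbelianRing R) (hex : ExchangeRing R)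
    (x : R) : TwoSidedIdeal.span {x} = (⊤ : TwoSidedIdeal R) ↔ IsUnit x := by
  constructor
  · intro hspan
    by_contra hx
    -- the set of two-sided ideals modulo which `x` is not a unit
    set S : Set (TwoSidedIdeal R) :=
      {I | ¬ ∃ y : R, x * y - 1 ∈ I ∧ y * x - 1 ∈ I} with hS
    have hbot : (⊥ : TwoSidedIdeal R) ∈ S := by
      rintro ⟨y, h1, h2⟩
      rw [TwoSidedIdeal.mem_bot, sub_eq_zero] at h1 h2
      exact hx ⟨⟨x, y, h1, h2⟩, rfl⟩
    -- Zorn's lemma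
    have hchain : ∀ c ⊆ S, IsChain (· ≤ ·) c → ∀ y ∈ c, ∃ ub ∈ S, ∀ z ∈ c, z ≤ ub := by
      intro c hcS hc I₀ hI₀
      have hz : (0 : R) ∈ ⋃ I ∈ c, (I : Set R) := Set.mem_biUnion hI₀ I₀.zero_mem
      have hmem : ∀ {p : R}, p ∈ (⋃ I ∈ c, (I : Set R)) → ∃ I ∈ c, p ∈ I := by
        intro p hp
        obtain ⟨I, hI, hpI⟩ := Set.mem_iUnion₂.1 hp
        exact ⟨I, hI, hpI⟩
      have hadd : ∀ {p q : R}, p ∈ (⋃ I ∈ c, (I : Set R)) → q ∈ (⋃ I ∈ c, (I : Set R)) →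
          p + q ∈ ⋃ I ∈ c, (I : Set R) := by
        intro p q hp hq
        obtain ⟨I, hI, hpI⟩ := hmem hp
        obtain ⟨J, hJ, hqJ⟩ := hmem hq
        rcases hc.total hI hJ with hIJ | hJI
        · exact Set.mem_biUnion hJ (J.add_mem (TwoSidedIdeal.le_iff.1 hIJ hpI) hqJ)
        · exact Set.mem_biUnion hI (I.add_mem hpI (TwoSidedIdeal.le_iff.1 hJI hqJ))
      have hneg : ∀ {p : R}, p ∈ (⋃ I ∈ c, (I : Set R)) → -p ∈ ⋃ I ∈ c, (I : Set R) := by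
        intro p hp
        obtain ⟨I, hI, hpI⟩ := hmem hp
        exact Set.mem_biUnion hI (I.neg_mem hpI)
      have hmulL : ∀ {p q : R}, q ∈ (⋃ I ∈ c, (I : Set R)) → p * q ∈ ⋃ I ∈ c, (I : Set R) := by
        intro p q hq
        obtain ⟨I, hI, hqI⟩ := hmem hq
        exact Set.mem_biUnion hI (I.mul_mem_left p q hqI)
      have hmulR : ∀ {p q : R}, p ∈ (⋃ I ∈ c, (I : Set R)) → p * q ∈ ⋃ I ∈ c, (I : Set R) := by
        intro p q hp
        obtain ⟨I, hI, hpI⟩ := hmem hp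
        exact Set.mem_biUnion hI (I.mul_mem_right p q hpI)
      refine ⟨TwoSidedIdeal.mk' (⋃ I ∈ c, (I : Set R)) hz hadd hneg hmulL hmulR, ?_, ?_⟩
      · rintro ⟨y, h1, h2⟩
        rw [TwoSidedIdeal.mem_mk'] at h1 h2
        obtain ⟨I, hI, h1I⟩ := hmem h1
        obtain ⟨J, hJ, h2J⟩ := hmem h2
        rcases hc.total hI hJ with hIJ | hJI
        · exact hcS hJ ⟨y, TwoSidedIdeal.le_iff.1 hIJ h1I, h2J⟩
        · exact hcS hI ⟨y, h1I, TwoSidedIdeal.le_iff.1 hJI h2J⟩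
      · intro z hzc
        rw [TwoSidedIdeal.le_iff, TwoSidedIdeal.coe_mk']
        exact fun w hw => Set.mem_biUnion hzc hw
    obtain ⟨M, -, hM⟩ := zorn_le_nonempty₀ S hchain ⊥ hbot
    have hMS : M ∈ S := hM.1
    -- pass to the quotient ring
    have hab' := quot_abelian hab hex M
    have hex' := quot_exchange hex M
    have hx' : ¬ IsUnit (M.ringCon.mk' x) := by
      rintro ⟨u, hu⟩
      obtain ⟨y, hy⟩ := quot_surj M (↑u⁻¹ : M.ringCon.Quotient)
      refine hMS ⟨y, (quot_mem M).1 ?_, (quot_mem M).1 ?_⟩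
      · rw [map_sub, map_mul, map_one, hy, ← hu, u.mul_inv, sub_self]
      · rw [map_sub, map_mul, map_one, hy, ← hu, u.inv_mul, sub_self]
    -- the quotient has only trivial idempotents
    have htriv : ∀ g' : M.ringCon.Quotient, IsIdempotentElem g' → g' = 0 ∨ g' = 1 := by
      intro g' hg'
      by_contra hcon
      push_neg at hcon
      obtain ⟨hg0, hg1⟩ := hcon
      have hcent : ∀ z, g' * z = z * g' := hab' g' hg'
      have hcent2 : ∀ z, (1 - g') * z = z * (1 - g') := by
        intro z
        rw [sub_mul, mul_sub, one_mul, mul_one, hcent z]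
      obtain ⟨I₁, hI₁⟩ := exists_centIdeal M.ringCon.mk' g' hcent
      obtain ⟨I₂, hI₂⟩ := exists_centIdeal M.ringCon.mk' (1 - g') hcent2
      obtain ⟨g, hg⟩ := quot_surj M g'
      have hMI₁ : M ≤ I₁ := by
        rw [TwoSidedIdeal.le_iff]
        intro z hz
        have h0 : M.ringCon.mk' z = 0 := (quot_mem M).2 hz
        exact (hI₁ z).2 (by rw [h0, mul_zero])
      have hMI₂ : M ≤ I₂ := by
        rw [TwoSidedIdeal.le_iff]
        intro z hz
        have h0 : M.ringCon.mk' z = 0 := (quot_mem M).2 hz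
        exact (hI₂ z).2 (by rw [h0, mul_zero])
      have hne₁ : I₁ ∉ S := by
        intro hmem
        have hle := hM.2 hmem hMI₁
        have hgI : g ∈ I₁ := (hI₁ g).2 (by rw [hg]; exact hg'.eq)
        have hgM : g ∈ M := TwoSidedIdeal.le_iff.1 hle hgI
        exact hg0 (by rw [← hg]; exact (quot_mem M).2 hgM)
      have hne₂ : I₂ ∉ S := by
        intro hmem
        have hle := hM.2 hmem hMI₂
        have hgI : (1 : R) - g ∈ I₂ := by
          refine (hI₂ _).2 ?_
          rw [map_sub, map_one, hg]
          exact (hg'.one_sub).eq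
        have hgM : (1 : R) - g ∈ M := TwoSidedIdeal.le_iff.1 hle hgI
        have h0 : (1 : M.ringCon.Quotient) - g' = 0 := by
          rw [← hg, ← map_one M.ringCon.mk', ← map_sub]
          exact (quot_mem M).2 hgM
        rw [sub_eq_zero] at h0
        exact hg1 h0.symm
      obtain ⟨y₁, hy₁, hy₁'⟩ := not_not.mp hne₁
      obtain ⟨y₂, hy₂, hy₂'⟩ := not_not.mp hne₂
      set X := M.ringCon.mk' x with hX
      set Y₁ := M.ringCon.mk' y₁ with hY₁
      set Y₂ := M.ringCon.mk' y₂ with hY₂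
      have e₁ : g' * (X * Y₁ - 1) = X * Y₁ - 1 := by
        have := (hI₁ _).1 hy₁
        rwa [map_sub, map_mul, map_one] at this
      have e₁' : g' * (Y₁ * X - 1) = Y₁ * X - 1 := by
        have := (hI₁ _).1 hy₁'
        rwa [map_sub, map_mul, map_one] at this
      have e₂ : (1 - g') * (X * Y₂ - 1) = X * Y₂ - 1 := by
        have := (hI₂ _).1 hy₂
        rwa [map_sub, map_mul, map_one] at this
      have e₂' : (1 - g') * (Y₂ * X - 1) = Y₂ * X - 1 := by
        have := (hI₂ _).1 hy₂'
        rwa [map_sub, map_mul, map_one] at this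
      have hg'0 : g' * (1 - g') = 0 := by
        rw [mul_sub, mul_one, hg'.eq, sub_self]
      have hg'0' : (1 - g') * g' = 0 := by
        rw [sub_mul, one_mul, hg'.eq, sub_self]
      have z₁ : ∀ t : M.ringCon.Quotient, g' * t = t → t * (1 - g') = 0 := by
        intro t ht
        rw [← ht, hcent t, mul_assoc, hg'0, mul_zero]
      have z₂ : ∀ t : M.ringCon.Quotient, (1 - g') * t = t → t * g' = 0 := by
        intro t ht
        rw [← ht, hcent2 t, mul_assoc, hg'0', mul_zero]
      set W := Y₁ * (1 - g') + Y₂ * g' with hW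
      have hXW : X * W = 1 := by
        have key : X * W - 1 = (X * Y₁ - 1) * (1 - g') + (X * Y₂ - 1) * g' := by
          rw [hW]; noncomm_ring
        rw [z₁ _ e₁, z₂ _ e₂, add_zero] at key
        rwa [sub_eq_zero] at key
      have hWX : W * X = 1 := by
        have key : W * X - 1 = Y₁ * ((1 - g') * X) + Y₂ * (g' * X) - 1 := by
          rw [hW]; noncomm_ring
        rw [hcent2 X, hcent X] at key
        have key2 : Y₁ * (X * (1 - g')) + Y₂ * (X * g') - 1
            = (Y₁ * X - 1) * (1 - g') + (Y₂ * X - 1) * g' := by noncomm_ring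
        rw [key2, z₁ _ e₁', z₂ _ e₂', add_zero] at key
        rwa [sub_eq_zero] at key
      exact hx' ⟨⟨X, W, hXW, hWX⟩, rfl⟩
    -- nonunits in the quotient form a two-sided ideal
    have h01 : (0 : M.ringCon.Quotient) ≠ 1 := by
      intro h
      have hall : ∀ z : M.ringCon.Quotient, z = 0 := by
        intro z
        calc z = z * 1 := (mul_one z).symm
          _ = z * 0 := by rw [← h]
          _ = 0 := mul_zero z
      exact hMS ⟨1, (quot_mem M).1 (hall _), (quot_mem M).1 (hall _)⟩
    have nonunit0 : ¬ IsUnit (0 : M.ringCon.Quotient) := fun h => h01 (isUnit_zero_iff.mp h)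
    have hNzero : (0 : R) ∈ {z : R | ¬ IsUnit (M.ringCon.mk' z)} := by
      show ¬ IsUnit (M.ringCon.mk' 0)
      rw [map_zero]
      exact nonunit0
    have hNadd : ∀ {p q : R}, p ∈ {z : R | ¬ IsUnit (M.ringCon.mk' z)} →
        q ∈ {z : R | ¬ IsUnit (M.ringCon.mk' z)} →
        p + q ∈ {z : R | ¬ IsUnit (M.ringCon.mk' z)} := by
      intro p q hp hq
      show ¬ IsUnit (M.ringCon.mk' (p + q))
      rw [map_add]
      exact aux_nonunit_add hab' hex' htriv hp hq
    have hNneg : ∀ {p : R}, p ∈ {z : R | ¬ IsUnit (M.ringCon.mk' z)} →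
        -p ∈ {z : R | ¬ IsUnit (M.ringCon.mk' z)} := by
      intro p hp h
      rw [map_neg] at h
      exact hp (by simpa using h.neg)
    have hNmulL : ∀ {p q : R}, q ∈ {z : R | ¬ IsUnit (M.ringCon.mk' z)} →
        p * q ∈ {z : R | ¬ IsUnit (M.ringCon.mk' z)} := by
      intro p q hq h
      rw [map_mul] at h
      exact hq (aux_unit_left hab' h)
    have hNmulR : ∀ {p q : R}, p ∈ {z : R | ¬ IsUnit (M.ringCon.mk' z)} →
        p * q ∈ {z : R | ¬ IsUnit (M.ringCon.mk' z)} := by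
      intro p q hp h
      rw [map_mul] at h
      exact hp (aux_unit_right hab' h)
    set N : TwoSidedIdeal R :=
      TwoSidedIdeal.mk' {z : R | ¬ IsUnit (M.ringCon.mk' z)} hNzero hNadd hNneg hNmulL hNmulR
      with hN
    have hxN : x ∈ N := by
      rw [hN, TwoSidedIdeal.mem_mk']
      exact hx'
    have h1span : (1 : R) ∈ TwoSidedIdeal.span {x} := by
      rw [hspan]
      exact TwoSidedIdeal.mem_top _
    have h1N : (1 : R) ∈ N :=
      TwoSidedIdeal.mem_span_iff.mp h1span N (Set.singleton_subset_iff.2 hxN)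
    rw [hN, TwoSidedIdeal.mem_mk'] at h1N
    exact h1N (by rw [map_one]; exact isUnit_one)
  · intro h
    obtain ⟨u, hu⟩ := h
    apply TwoSidedIdeal.eq_top
    have hxmem : x ∈ TwoSidedIdeal.span {x} :=
      TwoSidedIdeal.subset_span (Set.mem_singleton x)
    have h1 := TwoSidedIdeal.mul_mem_left _ (↑u⁻¹ : R) x hxmem
    have h2 : (↑u⁻¹ : R) * x = 1 := by rw [← hu]; exact u.inv_mul
    rwa [h2] at h1
end

section
/- If R is an abelian exchange ring, then the intersection of all maximal two-sided ideals of R equals the Jacobson radical J(R). -/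
/-- Every proper two-sided ideal is contained in a maximal (coatom) two-sided ideal. -/
lemma exists_coatom_ge {R : Type*} [Ring R] (I : TwoSidedIdeal R) (hI : (1 : R) ∉ I) :
    ∃ M : TwoSidedIdeal R, IsCoatom M ∧ I ≤ M := by
  set S : Set (TwoSidedIdeal R) := {J | (1 : R) ∉ J} with hS
  have hchain : ∀ c ⊆ S, IsChain (· ≤ ·) c → ∀ y ∈ c, ∃ ub ∈ S, ∀ z ∈ c, z ≤ ub := by
    intro c hcS hc y hy
    refine ⟨TwoSidedIdeal.mk' {x | ∃ J ∈ c, x ∈ J}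
      ⟨y, hy, TwoSidedIdeal.zero_mem y⟩
      (by
        rintro a b ⟨J1, hJ1, ha⟩ ⟨J2, hJ2, hb⟩
        rcases hc.total hJ1 hJ2 with h | h
        · exact ⟨J2, hJ2, J2.add_mem (h ha) hb⟩
        · exact ⟨J1, hJ1, J1.add_mem ha (h hb)⟩)
      (by rintro a ⟨J, hJ, ha⟩; exact ⟨J, hJ, J.neg_mem ha⟩)
      (by rintro a b ⟨J, hJ, hb⟩; exact ⟨J, hJ, J.mul_mem_left a b hb⟩)
      (by rintro a b ⟨J, hJ, ha⟩; exact ⟨J, hJ, J.mul_mem_right a b ha⟩), ?_, ?_⟩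
    · intro h1
      rw [TwoSidedIdeal.mem_mk'] at h1
      obtain ⟨J, hJ, h1⟩ := h1
      exact hcS hJ h1
    · intro z hz
      rw [TwoSidedIdeal.le_iff]
      intro a ha
      rw [SetLike.mem_coe, TwoSidedIdeal.mem_mk']
      exact ⟨z, hz, ha⟩
  obtain ⟨M, hIM, hM⟩ := zorn_le_nonempty₀ S hchain I hI
  refine ⟨M, ⟨?_, ?_⟩, hIM⟩
  · intro h
    exact hM.1 (h ▸ (TwoSidedIdeal.mem_top R))
  · intro J hJ
    by_contra hJtop
    have h1J : (1 : R) ∉ J := fun h => hJtop (TwoSidedIdeal.eq_top J h)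
    exact hJ.ne (le_antisymm (hM.2 h1J hJ.le) hJ.le).symm

/-- Key lemma: in an abelian exchange ring, if `a` lies in every maximal two-sided
ideal then `1 - a` is right invertible. -/
lemma right_inv_of_mem_all {R : Type*} [Ring R] (hab : AbelianRing R) (hex : ExchangeRing R)
    (a : R) (ha : ∀ M : TwoSidedIdeal R, IsCoatom M → a ∈ M) :
    ∃ s : R, (1 - a) * s = 1 := by
  obtain ⟨e, he, ⟨r, her⟩, ⟨s, hes⟩⟩ := hex a
  by_cases h0 : e = 0
  · exact ⟨s, by rw [← hes, h0, sub_zero]⟩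
  · exfalso
    have hcen := hab e he
    set Ann : TwoSidedIdeal R := TwoSidedIdeal.mk' {t | t * e = 0}
      (by simp)
      (by intro x y hx hy; simp only [Set.mem_setOf_eq] at *; rw [add_mul, hx, hy, add_zero])
      (by intro x hx; simp only [Set.mem_setOf_eq] at *; rw [neg_mul, hx, neg_zero])
      (by intro x y hy; simp only [Set.mem_setOf_eq] at *; rw [mul_assoc, hy, mul_zero])
      (by intro x y hx; simp only [Set.mem_setOf_eq] at *
          rw [mul_assoc, ← hcen y, ← mul_assoc, hx, zero_mul]) with hAnn
    have h1 : (1 : R) ∉ Ann := by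
      rw [hAnn, TwoSidedIdeal.mem_mk']
      simpa using h0
    obtain ⟨M, hM, hle⟩ := exists_coatom_ge Ann h1
    have heM : e ∈ M := her ▸ M.mul_mem_right a r (ha M hM)
    have h1eM : 1 - e ∈ M := by
      apply hle
      rw [hAnn, TwoSidedIdeal.mem_mk']
      show (1 - e) * e = 0
      rw [sub_mul, one_mul, he, sub_self]
    have : (1 : R) ∈ M := by
      have := M.add_mem heM h1eM
      rwa [add_sub_cancel] at this
    exact hM.1 (TwoSidedIdeal.eq_top M this)

theorem stmt13 {R : Type*} [Ring R] (hab : AbelianRing R) (hex : ExchangeRing R) :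
    ∀ x : R, (∀ M : TwoSidedIdeal R, IsCoatom M → x ∈ M) ↔
      x ∈ (⊥ : Ideal R).jacobson := by
  intro x
  constructor
  · intro h
    have key : ∀ b : R, (∀ M : TwoSidedIdeal R, IsCoatom M → b ∈ M) →
        ∃ z : R, z * (1 - b) = 1 := by
      intro b hb
      obtain ⟨s, hs⟩ := right_inv_of_mem_all hab hex b hb
      have hb' : ∀ M : TwoSidedIdeal R, IsCoatom M → -(b * s) ∈ M := fun M hM =>
        M.neg_mem (M.mul_mem_right b s (hb M hM))
      obtain ⟨t, ht⟩ := right_inv_of_mem_all hab hex (-(b * s)) hb'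
      have h1 : s - b * s = 1 := by rw [← hs, sub_mul, one_mul]
      have hseq : (1 : R) - -(b * s) = s := by
        rw [sub_neg_eq_add]; exact (eq_add_of_sub_eq h1).symm
      rw [hseq] at ht
      have h1b : (1 : R) - b = t := by
        calc (1 : R) - b = (1 - b) * (s * t) := by rw [ht, mul_one]
        _ = ((1 - b) * s) * t := by rw [mul_assoc]
        _ = t := by rw [hs, one_mul]
      exact ⟨s, by rw [h1b]; exact ht⟩
    rw [Ideal.mem_jacobson_iff]
    intro y
    obtain ⟨z, hz⟩ := key (-(y * x))
      (fun M hM => M.neg_mem (M.mul_mem_left y x (h M hM)))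
    refine ⟨z, ?_⟩
    rw [Ideal.mem_bot]
    have hre : z * y * x + z - 1 = z * (1 - -(y * x)) - 1 := by noncomm_ring
    rw [hre, hz, sub_self]
  · intro hx M hM
    by_contra hxM
    have hxJt : x ∈ TwoSidedIdeal.jacobson (⊥ : TwoSidedIdeal R) := by
      rw [TwoSidedIdeal.mem_jacobson_iff]
      intro y
      obtain ⟨z, hz⟩ := Ideal.mem_jacobson_iff.1 hx y
      exact ⟨z, (TwoSidedIdeal.mem_bot R).2 (Ideal.mem_bot.1 hz)⟩
    have hlt : M < M ⊔ TwoSidedIdeal.jacobson (⊥ : TwoSidedIdeal R) :=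
      lt_of_le_of_ne le_sup_left
        (fun hEq => hxM (hEq ▸ TwoSidedIdeal.mem_sup_right hxJt))
    have htop := hM.2 _ hlt
    have h1 : (1 : R) ∈ M ⊔ TwoSidedIdeal.jacobson (⊥ : TwoSidedIdeal R) :=
      htop ▸ (TwoSidedIdeal.mem_top R)
    obtain ⟨m, hm, t, htJ, hmt⟩ := TwoSidedIdeal.mem_sup.1 h1
    have htJ' : t ∈ (⊥ : Ideal R).jacobson := by
      rw [Ideal.mem_jacobson_iff]
      intro y
      obtain ⟨z, hz⟩ := TwoSidedIdeal.mem_jacobson_iff.1 htJ y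
      exact ⟨z, Ideal.mem_bot.2 ((TwoSidedIdeal.mem_bot R).1 hz)⟩
    have hm1 : m - 1 ∈ (⊥ : Ideal R).jacobson := by
      have : m - 1 = -t := by rw [← hmt]; abel
      rw [this]
      exact neg_mem htJ'
    obtain ⟨s, hs⟩ := Ideal.exists_mul_sub_mem_of_sub_one_mem_jacobson m hm1
    rw [Ideal.mem_bot, sub_eq_zero] at hs
    exact hM.1 (TwoSidedIdeal.eq_top M (hs ▸ M.mul_mem_left s m hm))
end

section
/- A ring R is an abelian periodic ring if and only if for every a ∈ R there exists m ≥ 1 such that aᵐ is uniquely nil clean, i.e., there is a unique idempotent e with aᵐ − e nilpotent. -/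
/-- A ring is periodic if for every a there exist distinct positive
integers m, n with a^m = a^n. -/
def PeriodicRing (R : Type*) [Ring R] : Prop :=
  ∀ a : R, ∃ m n : ℕ, 1 ≤ m ∧ 1 ≤ n ∧ m ≠ n ∧ a ^ m = a ^ n

section auxstmt16
variable {R : Type*} [Ring R]

private lemma trip_zero (x : R) (h3 : x ^ 3 = x) (hn : IsNilpotent x) : x = 0 := by
  obtain ⟨N, hN⟩ := hn
  have hodd : ∀ k, x ^ (2 * k + 1) = x := by
    intro k
    induction k with
    | zero => simpa using pow_one x
    | succ k ih =>
      rw [show 2*(k+1)+1 = (2*k+1)+2 by ring, pow_add, ih,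
        show x * x ^ 2 = x ^ 3 by noncomm_ring, h3]
  calc x = x ^ (2*N+1) := (hodd N).symm
    _ = x ^ N * x ^ (N+1) := by rw [← pow_add]; congr 1; ring
    _ = 0 := by rw [hN, zero_mul]

private lemma idem_eq (e f : R) (he : e*e = e) (hf : f*f = f) (hc : e * f = f * e)
    (hn : IsNilpotent (e - f)) : e = f := by
  have h3 : (e - f) ^ 3 = e - f := by
    have hee : ∀ x : R, e*(e*x) = e*x := fun x => by rw [← mul_assoc, he]
    have hff : ∀ x : R, f*(f*x) = f*x := fun x => by rw [← mul_assoc, hf]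
    have hfe : ∀ x : R, f*(e*x) = e*(f*x) := fun x => by rw [← mul_assoc, ← hc, mul_assoc]
    simp only [pow_succ, pow_zero, one_mul, mul_sub, sub_mul, hee, hff, hfe, he, hf, hc, mul_assoc]
    abel
  exact sub_eq_zero.mp (trip_zero _ h3 hn)

private lemma cmul_pow (c x : R) (hcc : c * c = c) (hcx : c * x = x * c) (k : ℕ) :
    (c * x) ^ (k + 1) = c * x ^ (k + 1) := by
  induction k with
  | zero => simp
  | succ k ih =>
    have hcom : c * x ^ (k+1) = x ^ (k+1) * c := (Commute.pow_right hcx (k+1))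
    calc (c*x)^(k+1+1) = (c*x)^(k+1) * (c*x) := pow_succ _ _
      _ = c * x^(k+1) * (c*x) := by rw [ih]
      _ = c * ((x^(k+1) * c) * x) := by rw [mul_assoc, mul_assoc]
      _ = c * ((c * x^(k+1)) * x) := by rw [hcom]
      _ = (c * c) * (x^(k+1) * x) := by simp only [mul_assoc]
      _ = c * x^(k+1+1) := by rw [hcc, ← pow_succ]

private lemma cast_mod' (n : ℕ) (hn : (n : R) = 0) (a : ℕ) : ((a % n : ℕ) : R) = (a : R) := by
  conv_rhs => rw [← Nat.mod_add_div a n]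
  push_cast
  rw [hn, zero_mul, add_zero]

private lemma unip (q : R) (K : ℕ) (hK : q ^ K = 0) (n : ℕ) (hn : 0 < n) (hch : (n : R) = 0) :
    ∃ s t : ℕ, s < t ∧ (1 + q) ^ s = (1 + q) ^ t := by
  have hexp : ∀ j, (1+q)^j = ∑ i ∈ Finset.range K, q ^ i * ((Nat.choose j i % n : ℕ) : R) := by
    intro j
    have h1 : (1+q)^j = ∑ i ∈ Finset.range (j+1), q ^ i * ((Nat.choose j i : ℕ) : R) := by
      rw [add_comm 1 q]
      simpa using (Commute.one_right q).add_pow j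
    have e1 : ∑ i ∈ Finset.range (j+1), q ^ i * ((Nat.choose j i : ℕ) : R)
        = ∑ i ∈ Finset.range (max (j+1) K), q ^ i * ((Nat.choose j i : ℕ) : R) := by
      apply Finset.sum_subset (Finset.range_subset_range.mpr (le_max_left _ _))
      intro i _ hi
      have : j < i := by simpa using Finset.mem_range.not.mp hi
      rw [Nat.choose_eq_zero_of_lt this]; simp
    have e2 : ∑ i ∈ Finset.range K, q ^ i * ((Nat.choose j i : ℕ) : R)
        = ∑ i ∈ Finset.range (max (j+1) K), q ^ i * ((Nat.choose j i : ℕ) : R) := by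
      apply Finset.sum_subset (Finset.range_subset_range.mpr (le_max_right _ _))
      intro i _ hi
      have hKi : K ≤ i := by simpa using Finset.mem_range.not.mp hi
      have : q ^ i = 0 := by
        rw [show i = K + (i - K) by omega, pow_add, hK, zero_mul]
      rw [this, zero_mul]
    rw [h1, e1, ← e2]
    exact Finset.sum_congr rfl fun i _ => by rw [cast_mod' n hch]
  set F : ℕ → (Fin K → Fin n) := fun j i => ⟨Nat.choose j i % n, Nat.mod_lt _ hn⟩ with hF
  obtain ⟨j, k, hne, hFe⟩ := Finite.exists_ne_map_eq_of_infinite F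
  have key : ∀ j k : ℕ, F j = F k → (1+q)^j = (1+q)^k := by
    intro j k hFe
    rw [hexp j, hexp k]
    apply Finset.sum_congr rfl
    intro i hi
    have h := congrFun hFe ⟨i, Finset.mem_range.mp hi⟩
    have h2 : Nat.choose j i % n = Nat.choose k i % n := congrArg Fin.val h
    rw [h2]
  rcases hne.lt_or_gt with h | h
  · exact ⟨j, k, h, key j k hFe⟩
  · exact ⟨k, j, h, key k j hFe.symm⟩

end auxstmt16

theorem stmt16 {R : Type*} [Ring R] :
    (AbelianRing R ∧ PeriodicRing R) ↔
      ∀ a : R, ∃ m : ℕ, 1 ≤ m ∧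
        ∃! e : R, IsIdempotentElem e ∧ IsNilpotent (a ^ m - e) := by
  constructor
  · rintro ⟨hA, hP⟩ a
    have main : ∀ m n : ℕ, 1 ≤ m → m < n → a ^ m = a ^ n →
        ∃ k : ℕ, 1 ≤ k ∧ a ^ k * a ^ k = a ^ k := by
      intro m n hm hlt heq
      have step : ∀ j, m ≤ j → a ^ (j + (n - m)) = a ^ j := by
        intro j hj
        have h1 : j + (n - m) = (j - m) + n := by omega
        have h2 : (j - m) + m = j := by omega
        rw [h1, pow_add, ← heq, ← pow_add, h2]
      have steps : ∀ t j, m ≤ j → a ^ (j + t * (n - m)) = a ^ j := by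
        intro t
        induction t with
        | zero => simp
        | succ t ih =>
          intro j hj
          have h1 : j + (t+1) * (n - m) = (j + t * (n - m)) + (n - m) := by ring
          rw [h1, step _ (le_trans hj (Nat.le_add_right _ _)), ih j hj]
      refine ⟨m * (n - m), ?_, ?_⟩
      · have h1 : 1 ≤ n - m := by omega
        exact Nat.mul_pos hm h1
      · rw [← pow_add]
        have hjm : m ≤ m * (n - m) := Nat.le_mul_of_pos_right m (by omega)
        exact steps m (m * (n - m)) hjm
    obtain ⟨m, n, hm, hn, hmn, heq⟩ := hP a
    have hidem : ∃ k, 1 ≤ k ∧ a ^ k * a ^ k = a ^ k := by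
      rcases Nat.lt_or_ge m n with h | h
      · exact main m n hm h heq
      · exact main n m hn (by omega) heq.symm
    obtain ⟨k, hk, hkidem⟩ := hidem
    refine ⟨k, hk, a ^ k, ⟨⟨hkidem, by rw [sub_self]; exact ⟨1, pow_one 0⟩⟩, ?_⟩⟩
    rintro y ⟨hyI, hyN⟩
    have hnil : IsNilpotent (y - a ^ k) := by
      have := hyN.neg
      rwa [neg_sub] at this
    exact idem_eq y (a ^ k) hyI hkidem (hA y hyI (a ^ k)) hnil
  · intro H
    have habelian : AbelianRing R := by
      intro f hf x
      obtain ⟨m, hm, e, ⟨heI, heN⟩, huniq⟩ := H f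
      obtain ⟨m', rfl⟩ : ∃ m', m = m' + 1 := ⟨m - 1, by omega⟩
      have hfm : f ^ (m' + 1) = f := IsIdempotentElem.pow_succ_eq m' hf
      have hfe : f = e := huniq f ⟨hf, by rw [hfm, sub_self]; exact ⟨1, pow_one 0⟩⟩
      have hf' : f * f = f := hf
      have hffr : ∀ y : R, y * f * f = y * f := fun y => by rw [mul_assoc, hf']
      have key : ∀ u : R, f * u = u → u * f = 0 → u = 0 := by
        intro u h1 h2
        have huu : u * u = 0 := by
          calc u * u = u * (f * u) := by rw [h1]
            _ = (u * f) * u := (mul_assoc _ _ _).symm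
            _ = 0 := by rw [h2, zero_mul]
        have hgI : IsIdempotentElem (f + u) := by
          show (f + u) * (f + u) = f + u
          rw [add_mul, mul_add, mul_add, hf, h1, h2, huu]; abel
        have hgN : IsNilpotent (f ^ (m' + 1) - (f + u)) := by
          rw [hfm, show f - (f + u) = -u by abel]
          exact ⟨2, by rw [pow_two, neg_mul_neg, huu]⟩
        have hfu : f + u = f := (huniq (f + u) ⟨hgI, hgN⟩).trans hfe.symm
        exact add_eq_left.mp hfu
      have key2 : ∀ u : R, u * f = u → f * u = 0 → u = 0 := by
        intro u h1 h2
        have huu : u * u = 0 := by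
          calc u * u = (u * f) * u := by rw [h1]
            _ = u * (f * u) := mul_assoc _ _ _
            _ = 0 := by rw [h2, mul_zero]
        have hgI : IsIdempotentElem (f + u) := by
          show (f + u) * (f + u) = f + u
          rw [add_mul, mul_add, mul_add, hf, h1, h2, huu]; abel
        have hgN : IsNilpotent (f ^ (m' + 1) - (f + u)) := by
          rw [hfm, show f - (f + u) = -u by abel]
          exact ⟨2, by rw [pow_two, neg_mul_neg, huu]⟩
        have hfu : f + u = f := (huniq (f + u) ⟨hgI, hgN⟩).trans hfe.symm
        exact add_eq_left.mp hfu
      have hx1 : f * x - f * (x * f) = 0 := by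
        apply key
        · simp only [mul_sub, ← mul_assoc, hf']
        · simp only [sub_mul, mul_sub, ← mul_assoc, hf', hffr, sub_self]
      have hx2 : x * f - f * (x * f) = 0 := by
        apply key2
        · simp only [sub_mul, mul_sub, ← mul_assoc, hf', hffr]
        · simp only [mul_sub, ← mul_assoc, hf', sub_self]
      have e1 : f * x = f * (x * f) := sub_eq_zero.mp hx1
      have e2 : x * f = f * (x * f) := sub_eq_zero.mp hx2
      rw [e1, ← e2]
    have htor : ∃ n : ℕ, 0 < n ∧ (n : R) = 0 := by
      obtain ⟨m, hm, e, ⟨heI, heN⟩, -⟩ := H (2 : R)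
      obtain ⟨N, hN⟩ := heN
      set q : R := (2:R) ^ m - e with hqdef
      clear_value q
      have hqK : q ^ (N+1) = 0 := by rw [pow_succ, hN, zero_mul]
      have hec : ∀ x : R, e * x = x * e := habelian e heI
      have h2c : ∀ x : R, (2:R) * x = x * 2 := fun x => by rw [two_mul, mul_two]
      have hC2 : ∀ x : R, Commute (2:R) x := fun x => h2c x
      have h2m : ∀ x : R, (2:R) ^ m * x = x * 2 ^ m := fun x => ((hC2 x).pow_left m).eq
      set c : R := (2:R) ^ m - 1 with hcdef
      clear_value c
      have hcc : ∀ x : R, c * x = x * c := fun x => by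
        rw [hcdef, sub_mul, mul_sub, one_mul, mul_one, h2m]
      have heq' : e * q = q * e := hec q
      have heqc : e * q = c * e := by
        rw [hqdef, hcdef, mul_sub, sub_mul, heI, one_mul, hec ((2:R) ^ m)]
      have hA : c ^ (N+1) * e = 0 := by
        calc c ^ (N+1) * e = c ^ (N+1) * e ^ (N+1) := by
              rw [IsIdempotentElem.pow_succ_eq N heI]
          _ = (c * e) ^ (N+1) := (Commute.mul_pow (hcc e) (N+1)).symm
          _ = (e * q) ^ (N+1) := by rw [heqc]
          _ = e * q ^ (N+1) := cmul_pow e q heI heq' N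
          _ = 0 := by rw [hqK, mul_zero]
      have hde : (1 - e) * e = 0 := by rw [sub_mul, one_mul, heI, sub_self]
      have hdI : (1 - e) * (1 - e) = (1 - e) := by rw [mul_sub, mul_one, hde, sub_zero]
      have hdq : (1 - e) * q = q * (1 - e) := by
        rw [mul_sub, sub_mul, mul_one, one_mul, heq']
      have hdq2 : (1 - e) * q = 2 ^ m * (1 - e) := by
        rw [hqdef, mul_sub, hde, sub_zero, ← h2m]
      have hB : (2:R) ^ (m * (N+1)) * (1 - e) = 0 := by
        calc (2:R) ^ (m * (N+1)) * (1 - e)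
            = ((2:R) ^ m) ^ (N+1) * (1 - e) ^ (N+1) := by
              rw [pow_mul, IsIdempotentElem.pow_succ_eq N hdI]
          _ = ((2:R) ^ m * (1 - e)) ^ (N+1) := (Commute.mul_pow (h2m (1 - e)) (N+1)).symm
          _ = ((1 - e) * q) ^ (N+1) := by rw [← hdq2]
          _ = (1 - e) * q ^ (N+1) := cmul_pow _ _ hdI hdq N
          _ = 0 := by rw [hqK, mul_zero]
      refine ⟨2 ^ (m * (N+1)) * (2 ^ m - 1) ^ (N+1), ?_, ?_⟩
      · have h1 : (0:ℕ) < 2 ^ (m * (N+1)) := Nat.two_pow_pos _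
        have h2 : 1 < 2 ^ m := Nat.one_lt_two_pow_iff.mpr (by omega)
        exact Nat.mul_pos h1 (pow_pos (by omega) _)
      · have h12 : 1 ≤ 2 ^ m := Nat.one_le_two_pow
        push_cast [Nat.cast_sub h12]
        rw [← hcdef]
        have hsplit : ∀ z : R, z = z * e + z * (1 - e) := fun z => by
          rw [mul_sub, mul_one]; abel
        calc (2:R) ^ (m * (N+1)) * c ^ (N+1)
            = ((2:R) ^ (m * (N+1)) * c ^ (N+1)) * e
              + ((2:R) ^ (m * (N+1)) * c ^ (N+1)) * (1 - e) := hsplit _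
          _ = 0 := by
              rw [mul_assoc, hA, mul_zero, zero_add, mul_assoc,
                ((Commute.pow_left (hcc (1 - e)) (N+1)).eq), ← mul_assoc, hB, zero_mul]
    constructor
    · exact habelian
    · intro a
      obtain ⟨m, hm, e, ⟨heI, heN⟩, -⟩ := H a
      obtain ⟨N, hN⟩ := heN
      set q : R := a ^ m - e with hqdef
      clear_value q
      have hqK : q ^ (N+1) = 0 := by rw [pow_succ, hN, zero_mul]
      have hec : ∀ x : R, e * x = x * e := habelian e heI
      have hae : a ^ m = e + q := by rw [hqdef]; abel
      set v : R := 1 + q with hvdef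
      clear_value v
      have hCev : Commute e v := hec v
      have heq' : e * q = q * e := hec q
      have hde : (1 - e) * e = 0 := by rw [sub_mul, one_mul, heI, sub_self]
      have hdI : (1 - e) * (1 - e) = (1 - e) := by rw [mul_sub, mul_one, hde, sub_zero]
      have hdq : (1 - e) * q = q * (1 - e) := by
        rw [mul_sub, sub_mul, mul_one, one_mul, heq']
      have hda : (1 - e) * a ^ m = (1 - e) * q := by
        rw [hae, mul_add, hde, zero_add]
      have hdam : (1 - e) * a ^ m = a ^ m * (1 - e) := by
        rw [mul_sub, sub_mul, one_mul, mul_one, hec (a ^ m)]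
      have I3 : (1 - e) * a ^ (m * (N+1)) = 0 := by
        calc (1 - e) * a ^ (m * (N+1)) = (1 - e) * (a ^ m) ^ (N+1) := by rw [pow_mul]
          _ = ((1 - e) * a ^ m) ^ (N+1) := (cmul_pow _ _ hdI hdam N).symm
          _ = ((1 - e) * q) ^ (N+1) := by rw [hda]
          _ = (1 - e) * q ^ (N+1) := cmul_pow _ _ hdI hdq N
          _ = 0 := by rw [hqK, mul_zero]
      have I2 : ∀ j, e * a ^ (m * j) = e * v ^ j := by
        intro j
        induction j with
        | zero => simp
        | succ j ih =>
          have hev2 : e * a ^ m = e * v := by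
            rw [hae, hvdef, mul_add, mul_add, mul_one, heI]
          calc e * a ^ (m * (j+1)) = e * (a ^ (m * j) * a ^ m) := by
                rw [Nat.mul_succ, pow_add]
            _ = (e * a ^ (m * j)) * a ^ m := (mul_assoc _ _ _).symm
            _ = (e * v ^ j) * a ^ m := by rw [ih]
            _ = v ^ j * (e * a ^ m) := by rw [(hCev.pow_right j).eq, mul_assoc]
            _ = v ^ j * (e * v) := by rw [hev2]
            _ = (v ^ j * e) * v := (mul_assoc _ _ _).symm
            _ = (e * v ^ j) * v := by rw [← (hCev.pow_right j).eq]
            _ = e * v ^ (j+1) := by rw [mul_assoc, ← pow_succ]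
      obtain ⟨nt, hnt, hch⟩ := htor
      obtain ⟨s, t, hst, hvst⟩ := unip q (N+1) hqK nt hnt hch
      have hvst' : v ^ s = v ^ t := by rw [hvdef]; exact hvst
      have hsplit : ∀ j, a ^ (m * (N+1+j)) = e * v ^ (N+1+j) := by
        intro j
        have h0 : a ^ (m * (N+1+j))
            = e * a ^ (m * (N+1+j)) + (1 - e) * a ^ (m * (N+1+j)) := by
          rw [sub_mul, one_mul]; abel
        have h1 : (1 - e) * a ^ (m * (N+1+j)) = 0 := by
          rw [show m * (N+1+j) = m * (N+1) + m * j by ring, pow_add, ← mul_assoc, I3, zero_mul]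
        rw [h0, h1, add_zero, I2]
      refine ⟨m * (N+1+s), m * (N+1+t), ?_, ?_, ?_, ?_⟩
      · exact Nat.mul_pos (by omega) (by omega)
      · exact Nat.mul_pos (by omega) (by omega)
      · intro hcon
        have := Nat.eq_of_mul_eq_mul_left (show 0 < m by omega) hcon
        omega
      · rw [hsplit s, hsplit t]
        congr 1
        rw [pow_add v (N+1) s, pow_add v (N+1) t, hvst']
end

section
/- Every generalized n-like ring (n ≥ 2) is abelian: all idempotents are central. In fact, in such a ring every pair of idempotents commutes and a − aⁿ is nilpotent with (a − aⁿ)² = 0 for every a. -/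
private lemma aux18 {R : Type*} [Ring R] (n : ℕ) (hn : 2 ≤ n)
    (h : ∀ a b : R, (a * b) ^ n - a * b ^ n - a ^ n * b + a * b = 0)
    (e x : R) (he : IsIdempotentElem e) : e * x - e * x * e = 0 := by
  obtain ⟨m, rfl⟩ : ∃ m, n = m + 2 := ⟨n - 2, by omega⟩
  set v : R := e * x - e * x * e with hv
  have hee : e * e = e := he
  have hve : v * e = 0 := by
    simp only [hv, sub_mul, mul_assoc, hee, sub_self]
  have hev : e * v = v := by
    simp only [hv, mul_sub, ← mul_assoc, hee]
  have hv2 : v * v = 0 := by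
    calc v * v = (v * e) * (x - x * e) := by rw [hv]; noncomm_ring
    _ = 0 := by rw [hve, zero_mul]
  have hf : IsIdempotentElem (e + v) := by
    show (e + v) * (e + v) = e + v
    rw [mul_add, add_mul, add_mul, hee, hev, hve, hv2, add_zero, add_zero]
  have h1e : IsIdempotentElem (1 - e) := he.one_sub
  have hfe : (e + v) * (1 - e) = v := by
    rw [mul_one_sub, add_mul, hee, hve, add_zero, add_sub_cancel_left]
  have hvn : v ^ (m + 2) = 0 := by
    rw [pow_succ, pow_succ, mul_assoc, hv2, mul_zero]
  have hh := h (e + v) (1 - e)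
  rw [hfe, hvn, show (1 - e) ^ (m + 2) = 1 - e from h1e.pow_succ_eq (m + 1),
    show (e + v) ^ (m + 2) = e + v from hf.pow_succ_eq (m + 1), hfe] at hh
  -- hh : 0 - v - v + v = 0
  have : -v = 0 := by linear_combination (norm := abel) hh
  simpa using this

theorem stmt18 {R : Type*} [Ring R] (n : ℕ) (hn : 2 ≤ n)
    (h : ∀ a b : R, (a * b) ^ n - a * b ^ n - a ^ n * b + a * b = 0) :
    AbelianRing R ∧
      (∀ e f : R, IsIdempotentElem e → IsIdempotentElem f → e * f = f * e) ∧
      (∀ a : R, (a - a ^ n) ^ 2 = 0) := by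
  have hab : AbelianRing R := by
    intro e he x
    have h1 : e * x - e * x * e = 0 := aux18 n hn h e x he
    have h2 : (1 - e) * x - (1 - e) * x * (1 - e) = 0 := aux18 n hn h (1 - e) x he.one_sub
    have h3 : x * e - e * x * e = 0 := by
      linear_combination (norm := noncomm_ring) h2
    exact (sub_eq_zero.mp h1).trans (sub_eq_zero.mp h3).symm
  refine ⟨hab, fun e f he hf => hab e he f, fun a => ?_⟩
  have hx := h a a
  have k1 : a ^ n * a ^ n = (a * a) ^ n := by
    rw [← pow_add, ← sq, ← pow_mul, two_mul]
  rw [sq, sub_mul, mul_sub, mul_sub, k1]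
  linear_combination (norm := abel) hx
end

section
/- If R is uniquely clean, then J(R) = { x ∈ R : x − 1 is a unit }. -/
section Aux

variable {R : Type*} [Ring R]

lemma uc_unique (h : ∀ a : R, UniquelyCleanElem a) {a e f : R}
    (he : IsIdempotentElem e) (hf : IsIdempotentElem f)
    (hue : IsUnit (a - e)) (huf : IsUnit (a - f)) : e = f :=
  (h a).unique ⟨he, hue⟩ ⟨hf, huf⟩

lemma sq_zero_unit {t : R} (ht : t * t = 0) : IsUnit (1 + t) := by
  refine isUnit_iff_exists.mpr ⟨1 - t, ?_, ?_⟩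
  · have e1 : (1 + t) * (1 - t) = 1 - t * t := by noncomm_ring
    rw [e1, ht, sub_zero]
  · have e1 : (1 - t) * (1 + t) = 1 - t * t := by noncomm_ring
    rw [e1, ht, sub_zero]

lemma uc_central (h : ∀ a : R, UniquelyCleanElem a) {e : R}
    (he : IsIdempotentElem e) (x : R) : e * x = x * e := by
  have hee : e * e = e := he
  -- Part 1 : e*x = e*(x*e)
  have k1 : (x - x * e) * e = 0 := by
    rw [sub_mul, mul_assoc, hee, sub_self]
  have ht2 : (e * (x - x * e)) * (e * (x - x * e)) = 0 := by
    have e1 : (e * (x - x * e)) * (e * (x - x * e))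
        = e * ((x - x * e) * e) * (x - x * e) := by noncomm_ring
    rw [e1, k1, mul_zero, zero_mul]
  have het : e * (e * (x - x * e)) = e * (x - x * e) := by
    rw [← mul_assoc, hee]
  have hte : (e * (x - x * e)) * e = 0 := by
    rw [mul_assoc, k1, mul_zero]
  have hf : IsIdempotentElem (e + e * (x - x * e)) := by
    show (e + e * (x - x * e)) * (e + e * (x - x * e)) = e + e * (x - x * e)
    have e1 : (e + e * (x - x * e)) * (e + e * (x - x * e))
        = e * e + e * (e * (x - x * e)) + ((e * (x - x * e)) * e
          + (e * (x - x * e)) * (e * (x - x * e))) := by noncomm_ring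
    rw [e1, hee, het, hte, ht2, add_zero, add_zero]
  have h1 : IsUnit ((1 + e * (x - x * e) + e) - e) := by
    rw [add_sub_cancel_right]; exact sq_zero_unit ht2
  have h2 : IsUnit ((1 + e * (x - x * e) + e) - (e + e * (x - x * e))) := by
    have e1 : (1 + e * (x - x * e) + e) - (e + e * (x - x * e)) = 1 := by abel
    rw [e1]; exact isUnit_one
  have heq := uc_unique h he hf h1 h2
  have ht0 : e * (x - x * e) = 0 := (left_eq_add.mp heq)
  have part1 : e * x = e * (x * e) := by
    rw [mul_sub] at ht0
    exact sub_eq_zero.mp ht0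
  -- Part 2 : x*e = (e*x)*e
  have k2 : e * (x - e * x) = 0 := by
    rw [mul_sub, ← mul_assoc, hee, sub_self]
  have hs2 : ((x - e * x) * e) * ((x - e * x) * e) = 0 := by
    have e1 : ((x - e * x) * e) * ((x - e * x) * e)
        = (x - e * x) * (e * (x - e * x)) * e := by noncomm_ring
    rw [e1, k2, mul_zero, zero_mul]
  have hes : e * ((x - e * x) * e) = 0 := by
    rw [← mul_assoc, k2, zero_mul]
  have hse : ((x - e * x) * e) * e = (x - e * x) * e := by
    rw [mul_assoc, hee]
  have hf' : IsIdempotentElem (e + (x - e * x) * e) := by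
    show (e + (x - e * x) * e) * (e + (x - e * x) * e) = e + (x - e * x) * e
    have e1 : (e + (x - e * x) * e) * (e + (x - e * x) * e)
        = e * e + e * ((x - e * x) * e) + (((x - e * x) * e) * e
          + ((x - e * x) * e) * ((x - e * x) * e)) := by noncomm_ring
    rw [e1, hee, hes, hse, hs2, add_zero, add_zero]
  have h1' : IsUnit ((1 + (x - e * x) * e + e) - e) := by
    rw [add_sub_cancel_right]; exact sq_zero_unit hs2
  have h2' : IsUnit ((1 + (x - e * x) * e + e) - (e + (x - e * x) * e)) := by
    have e1 : (1 + (x - e * x) * e + e) - (e + (x - e * x) * e) = 1 := by abel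
    rw [e1]; exact isUnit_one
  have heq' := uc_unique h he hf' h1' h2'
  have hs0 : (x - e * x) * e = 0 := (left_eq_add.mp heq')
  have part2 : x * e = (e * x) * e := by
    rw [sub_mul] at hs0
    exact sub_eq_zero.mp hs0
  calc e * x = e * (x * e) := part1
  _ = (e * x) * e := (mul_assoc e x e).symm
  _ = x * e := part2.symm

lemma uc_key (h : ∀ a : R, UniquelyCleanElem a) {x : R}
    (hx : IsUnit (x - 1)) (y : R) : IsUnit (y * x + 1) := by
  obtain ⟨e, ⟨he, hvu⟩, -⟩ := h (-(y * x))
  obtain ⟨v, hv⟩ := hvu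
  obtain ⟨u, hu⟩ := hx
  set f : R := 1 - e with hfdef
  have hf : IsIdempotentElem f := he.one_sub
  have hee : e * e = e := he
  have hff : f * f = f := hf
  have hcomm : ∀ z : R, f * z = z * f := fun z => by
    rw [hfdef, sub_mul, mul_sub, one_mul, mul_one, uc_central h he z]
  have swapf : ∀ a b : R, a * (f * b) = f * (a * b) := fun a b => by
    rw [← mul_assoc, ← hcomm, mul_assoc]
  have absf : ∀ a : R, f * (f * a) = f * a := fun a => by
    rw [← mul_assoc, hff]
  have hfe : f * e = 0 := by rw [hfdef, sub_mul, one_mul, hee, sub_self]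
  have hfyx : f * (y * x) = -(f * (v : R)) := by
    have hyx : y * x = -(v : R) - e := by rw [hv]; abel
    rw [hyx, mul_sub, mul_neg, hfe, sub_zero]
  -- X := f * x has left inverse z in the corner ring f R
  set X : R := f * x with hXdef
  set z : R := -((f * ((v⁻¹ : Rˣ) : R)) * (f * y)) with hzdef
  have hYX : (f * y) * (f * x) = -(f * (v : R)) := by
    calc (f * y) * (f * x) = f * (y * (f * x)) := by rw [mul_assoc]
    _ = f * (f * (y * x)) := by rw [swapf y x]
    _ = f * (y * x) := absf _
    _ = -(f * (v : R)) := hfyx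
  have hzX : z * X = f := by
    rw [hzdef, hXdef, neg_mul, mul_assoc, hYX, mul_neg, neg_neg]
    calc (f * ((v⁻¹ : Rˣ) : R)) * (f * (v : R))
        = f * (((v⁻¹ : Rˣ) : R) * (f * (v : R))) := by rw [mul_assoc]
    _ = f * (f * (((v⁻¹ : Rˣ) : R) * (v : R))) := by rw [swapf]
    _ = f * (f * 1) := by rw [Units.inv_mul]
    _ = f := by rw [mul_one, hff]
  have hfX : f * X = X := by rw [hXdef, ← mul_assoc, hff]
  have hXf : X * f = X := by rw [hXdef, mul_assoc, ← hcomm x, ← mul_assoc, hff]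
  have hfz : f * z = z := by
    calc f * z = -(f * (f * (((v⁻¹ : Rˣ) : R) * (f * y)))) := by
          rw [hzdef, mul_neg, mul_assoc]
    _ = -(f * (((v⁻¹ : Rˣ) : R) * (f * y))) := by rw [absf]
    _ = z := by rw [hzdef, mul_assoc]
  have hzf : z * f = z := by rw [← hcomm z, hfz]
  -- Dedekind-finiteness in the corner: X * z = f as well
  have he' : IsIdempotentElem (X * z) := by
    show (X * z) * (X * z) = X * z
    have e1 : (X * z) * (X * z) = X * ((z * X) * z) := by noncomm_ring
    rw [e1, hzX, hfz]
  have he'c := uc_central h he'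
  have hfe' : (X * z) * f = X * z := by rw [mul_assoc, hzf]
  have hstep : (f - X * z) * X = 0 := by
    rw [sub_mul, hfX, mul_assoc, hzX, hXf, sub_self]
  have hXz : X * z = f := by
    have hc2 : (f - X * z) * z = z * (f - X * z) := by
      rw [sub_mul, mul_sub, hcomm z, he'c z]
    have e2 : f - X * z = 0 := by
      calc f - X * z = (f - X * z) * f := by rw [sub_mul, hff, hfe']
      _ = (f - X * z) * (z * X) := by rw [hzX]
      _ = ((f - X * z) * z) * X := (mul_assoc _ _ _).symm
      _ = (z * (f - X * z)) * X := by rw [hc2]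
      _ = z * ((f - X * z) * X) := mul_assoc _ _ _
      _ = 0 := by rw [hstep, mul_zero]
    have := sub_eq_zero.mp e2
    exact this.symm
  -- the element p := e*u + X is a unit, and x - e = p
  have h1f : (1 - f) * (1 - f) = 1 - f := by
    have e1 : (1 - f) * (1 - f) = 1 - f - f + f * f := by noncomm_ring
    rw [e1, hff]; abel
  have h1f0 : (1 - f) * f = 0 := by rw [sub_mul, one_mul, hff, sub_self]
  have hf01 : f * (1 - f) = 0 := by rw [mul_sub, mul_one, hff, sub_self]
  have swap1f : ∀ a b : R, a * ((1 - f) * b) = (1 - f) * (a * b) := fun a b => by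
    have hcomm1 : ∀ w : R, (1 - f) * w = w * (1 - f) := fun w => by
      rw [sub_mul, mul_sub, one_mul, mul_one, hcomm]
    rw [← mul_assoc, ← hcomm1, mul_assoc]
  set p : R := (1 - f) * (u : R) + X with hpdef
  set q : R := (1 - f) * ((u⁻¹ : Rˣ) : R) + z with hqdef
  have t1 : ((1 - f) * (u : R)) * ((1 - f) * ((u⁻¹ : Rˣ) : R)) = 1 - f := by
    calc ((1 - f) * (u : R)) * ((1 - f) * ((u⁻¹ : Rˣ) : R))
        = (1 - f) * ((u : R) * ((1 - f) * ((u⁻¹ : Rˣ) : R))) := by rw [mul_assoc]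
    _ = (1 - f) * ((1 - f) * ((u : R) * ((u⁻¹ : Rˣ) : R))) := by rw [swap1f]
    _ = (1 - f) * ((1 - f) * 1) := by rw [Units.mul_inv]
    _ = 1 - f := by rw [mul_one, h1f]
  have t1' : ((1 - f) * ((u⁻¹ : Rˣ) : R)) * ((1 - f) * (u : R)) = 1 - f := by
    calc ((1 - f) * ((u⁻¹ : Rˣ) : R)) * ((1 - f) * (u : R))
        = (1 - f) * (((u⁻¹ : Rˣ) : R) * ((1 - f) * (u : R))) := by rw [mul_assoc]
    _ = (1 - f) * ((1 - f) * (((u⁻¹ : Rˣ) : R) * (u : R))) := by rw [swap1f]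
    _ = (1 - f) * ((1 - f) * 1) := by rw [Units.inv_mul]
    _ = 1 - f := by rw [mul_one, h1f]
  have t2 : ((1 - f) * (u : R)) * z = 0 := by
    calc ((1 - f) * (u : R)) * z = ((1 - f) * (u : R)) * (f * z) := by rw [hfz]
    _ = (1 - f) * ((u : R) * (f * z)) := by rw [mul_assoc]
    _ = (1 - f) * (f * ((u : R) * z)) := by rw [swapf]
    _ = ((1 - f) * f) * ((u : R) * z) := by rw [mul_assoc]
    _ = 0 := by rw [h1f0, zero_mul]
  have t2' : ((1 - f) * ((u⁻¹ : Rˣ) : R)) * X = 0 := by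
    calc ((1 - f) * ((u⁻¹ : Rˣ) : R)) * X
        = ((1 - f) * ((u⁻¹ : Rˣ) : R)) * (f * X) := by rw [hfX]
    _ = (1 - f) * (((u⁻¹ : Rˣ) : R) * (f * X)) := by rw [mul_assoc]
    _ = (1 - f) * (f * (((u⁻¹ : Rˣ) : R) * X)) := by rw [swapf]
    _ = ((1 - f) * f) * (((u⁻¹ : Rˣ) : R) * X) := by rw [mul_assoc]
    _ = 0 := by rw [h1f0, zero_mul]
  have t3 : X * ((1 - f) * ((u⁻¹ : Rˣ) : R)) = 0 := by
    calc X * ((1 - f) * ((u⁻¹ : Rˣ) : R))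
        = (1 - f) * (X * ((u⁻¹ : Rˣ) : R)) := by rw [swap1f]
    _ = (1 - f) * ((f * x) * ((u⁻¹ : Rˣ) : R)) := by rw [hXdef]
    _ = ((1 - f) * f) * (x * ((u⁻¹ : Rˣ) : R)) := by noncomm_ring
    _ = 0 := by rw [h1f0, zero_mul]
  have t3' : z * ((1 - f) * (u : R)) = 0 := by
    calc z * ((1 - f) * (u : R)) = (1 - f) * (z * (u : R)) := by rw [swap1f]
    _ = (1 - f) * ((f * z) * (u : R)) := by rw [hfz]
    _ = ((1 - f) * f) * (z * (u : R)) := by noncomm_ring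
    _ = 0 := by rw [h1f0, zero_mul]
  have hpq : p * q = 1 := by
    rw [hpdef, hqdef, add_mul, mul_add, mul_add, t1, t2, t3, hXz]
    simp
  have hqp : q * p = 1 := by
    rw [hqdef, hpdef, add_mul, mul_add, mul_add, t1', t2', t3', hzX]
    simp
  have hp : IsUnit p := isUnit_iff_exists.mpr ⟨q, hpq, hqp⟩
  have hxe : x - e = p := by
    rw [hpdef, hXdef, hfdef, hu]
    noncomm_ring
  have he1 : e = 1 := by
    refine uc_unique (a := x) h he IsIdempotentElem.one ?_ ?_
    · rw [hxe]; exact hp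
    · exact ⟨u, hu⟩
  have hfin : y * x + 1 = -(v : R) := by
    rw [hv, he1]; abel
  rw [hfin]
  exact v.isUnit.neg

end Aux

theorem stmt19 {R : Type*} [Ring R] (h : ∀ a : R, UniquelyCleanElem a) :
    ∀ x : R, x ∈ (⊥ : Ideal R).jacobson ↔ IsUnit (x - 1) := by
  intro x
  constructor
  · intro hx
    obtain ⟨z, hz⟩ := Ideal.mem_jacobson_iff.mp hx (-1)
    rw [Ideal.mem_bot] at hz
    have hz1 : z * (1 - x) = 1 := by
      have e1 : z * (-1) * x + z - 1 = z * (1 - x) - 1 := by noncomm_ring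
      rw [e1] at hz
      exact sub_eq_zero.mp hz
    have hzx : z - 1 ∈ (⊥ : Ideal R).jacobson := by
      have e1 : z * (1 - x) = z - z * x := by noncomm_ring
      rw [e1] at hz1
      have e2 : z - 1 = z * x := by rw [← hz1]; abel
      rw [e2]
      exact Ideal.mul_mem_left _ z hx
    obtain ⟨w, hw⟩ := Ideal.mem_jacobson_iff.mp hzx 1
    rw [Ideal.mem_bot] at hw
    have hwz : w * z = 1 := by
      have e1 : w * 1 * (z - 1) + w - 1 = w * z - 1 := by noncomm_ring
      rw [e1] at hw
      exact sub_eq_zero.mp hw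
    have hwx : w = 1 - x := by
      calc w = w * (z * (1 - x)) := by rw [hz1, mul_one]
      _ = (w * z) * (1 - x) := by rw [mul_assoc]
      _ = 1 - x := by rw [hwz, one_mul]
    have hunit : IsUnit (1 - x) := by
      refine isUnit_iff_exists.mpr ⟨z, ?_, hz1⟩
      rw [← hwx]; exact hwz
    have := hunit.neg
    rwa [neg_sub] at this
  · intro hx
    rw [Ideal.mem_jacobson_iff]
    intro y
    obtain ⟨w, hw1, hw2⟩ := isUnit_iff_exists.mp (uc_key h hx y)
    refine ⟨w, ?_⟩
    rw [Ideal.mem_bot]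
    have e1 : w * y * x + w - 1 = w * (y * x + 1) - 1 := by noncomm_ring
    rw [e1, hw2, sub_self]
end
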